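/- arXiv:0907.2954 — 4 statements merged into one kernel-verified Lean document; each statement's English description precedes it below -/
import Mathlib

section
/- A finite simplicial complex K is strong collapsible if and only if its barycentric subdivision K' is strong collapsible. -/
/- Theory of strong homotopy types of finite simplicial complexes
   (Barmak–Minian), basic definitions. -/

open Classical

namespace StrongHomotopy

/-- A finite abstract simplicial complex with vertices from the ambient type `V`:
a finite family of nonempty finite subsets of `V`, closed under nonempty subsets.
(All singletons of vertices actually used are faces, by downward closure.) -/
structure Cplx (V : Type) where
  faces : Finset (Finset V)
  nonempty_of_mem : ∀ ⦃σ : Finset V⦄, σ ∈ faces → σ.Nonempty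
  down_closed : ∀ ⦃σ τ : Finset V⦄, σ ∈ faces → τ ⊆ σ → τ.Nonempty → τ ∈ faces

variable {V W : Type}

/-- `v` is a vertex of `K`. -/
def IsVertex (K : Cplx V) (v : V) : Prop := {v} ∈ K.faces

noncomputable section

/-- The set of faces of the link of `v` in `K`. -/
def link (K : Cplx V) (v : V) : Finset (Finset V) :=
  K.faces.filter fun σ => v ∉ σ ∧ insert v σ ∈ K.faces

/-- A family of faces is a simplicial cone with apex `a`. -/
def IsConeWithApex (F : Finset (Finset V)) (a : V) : Prop :=
  {a} ∈ F ∧ ∀ σ ∈ F, insert a σ ∈ F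

/-- A family of faces is a simplicial cone. -/
def IsCone (F : Finset (Finset V)) : Prop := ∃ a, IsConeWithApex F a

/-- `v` is dominated by `v'` in `K`: the link of `v` is a cone with apex `v'`. -/
def DominatedBy (K : Cplx V) (v v' : V) : Prop := IsConeWithApex (link K v) v'

/-- `v` is a dominated vertex of `K`: its link is a simplicial cone. -/
def Dominated (K : Cplx V) (v : V) : Prop := IsCone (link K v)

/-- Deletion `K ∖ v`: the full subcomplex spanned by the vertices other than `v`. -/
def delete (K : Cplx V) (v : V) : Cplx V where
  faces := K.faces.filter fun σ => v ∉ σ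
  nonempty_of_mem := fun σ h => K.nonempty_of_mem (Finset.mem_filter.mp h).1
  down_closed := by
    intro σ τ hσ hsub hne
    rw [Finset.mem_filter] at hσ ⊢
    exact ⟨K.down_closed hσ.1 hsub hne, fun hv => hσ.2 (hsub hv)⟩

/-- The link of a vertex, as a simplicial complex. -/
def linkCplx (K : Cplx V) (v : V) : Cplx V where
  faces := link K v
  nonempty_of_mem := fun σ h => K.nonempty_of_mem (Finset.mem_filter.mp h).1
  down_closed := by
    intro σ τ hσ hsub hne
    simp only [link, Finset.mem_filter] at hσ ⊢
    refine ⟨K.down_closed hσ.1 hsub hne, fun hv => hσ.2.1 (hsub hv), ?_⟩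
    exact K.down_closed hσ.2.2 (Finset.insert_subset_insert v hsub)
      ⟨v, Finset.mem_insert_self v τ⟩

/-- Elementary strong collapse: deletion of a dominated vertex. -/
def ElemStrongCollapse (K L : Cplx V) : Prop := ∃ v, Dominated K v ∧ L = delete K v

/-- `K` strong collapses to `L` (a sequence of elementary strong collapses). -/
def StrongCollapses : Cplx V → Cplx V → Prop := Relation.ReflTransGen ElemStrongCollapse

/-- The complex with a single vertex `v`. -/
def pt (v : V) : Cplx V where
  faces := {{v}}
  nonempty_of_mem := by
    intro σ h
    rw [Finset.mem_singleton] at h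
    subst h
    exact ⟨v, Finset.mem_singleton_self v⟩
  down_closed := by
    intro σ τ hσ hsub hne
    rw [Finset.mem_singleton] at hσ ⊢
    subst hσ
    rcases Finset.subset_singleton_iff.mp hsub with h | h
    · exact absurd h (Finset.nonempty_iff_ne_empty.mp hne)
    · exact h

/-- `K` is strong collapsible: it strong collapses to a single vertex. -/
def StrongCollapsible (K : Cplx V) : Prop := ∃ v, StrongCollapses K (pt v)

/-- A minimal complex: no dominated vertices. -/
def MinimalCplx (K : Cplx V) : Prop := ∀ v, ¬ Dominated K v

/-- A vertex map is simplicial if it sends faces to faces. -/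
def IsSimplicial (K : Cplx V) (L : Cplx W) (f : V → W) : Prop :=
  ∀ σ ∈ K.faces, σ.image f ∈ L.faces

/-- Two vertex maps are contiguous. -/
def Contiguous (K : Cplx V) (L : Cplx W) (f g : V → W) : Prop :=
  ∀ σ ∈ K.faces, σ.image f ∪ σ.image g ∈ L.faces

/-- `f` and `g` lie in the same contiguity class: they are joined by
a finite chain of (pairwise contiguous) maps. -/
def ContigClass (K : Cplx V) (L : Cplx W) : (V → W) → (V → W) → Prop :=
  Relation.ReflTransGen (Contiguous K L)

/-- A strong equivalence of simplicial complexes. -/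
def StrongEquiv (K : Cplx V) (L : Cplx W) (f : V → W) : Prop :=
  IsSimplicial K L f ∧ ∃ g : W → V, IsSimplicial L K g ∧
    ContigClass K K (g ∘ f) id ∧ ContigClass L L (f ∘ g) id

/-- `f` is a simplicial isomorphism from `K` to `L`: a simplicial map,
injective on vertices, inducing a bijection on faces. -/
def IsIsoMap (K : Cplx V) (L : Cplx W) (f : V → W) : Prop :=
  IsSimplicial K L f ∧ Set.InjOn f {v | IsVertex K v} ∧
    K.faces.image (fun σ => σ.image f) = L.faces

/-- `K` and `L` are simplicially isomorphic. -/
def Isomorphic (K : Cplx V) (L : Cplx W) : Prop := ∃ f, IsIsoMap K L f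

/-- `L` is a subcomplex of `K`. -/
def Subcplx (L K : Cplx V) : Prop := L.faces ⊆ K.faces

/-- `L` is a full subcomplex of `K`. -/
def IsFullSub (L K : Cplx V) : Prop :=
  L.faces ⊆ K.faces ∧ ∀ σ ∈ K.faces, (∀ v ∈ σ, IsVertex L v) → σ ∈ L.faces

/-- `K₀` is a core of `K`: a minimal complex to which `K` strong collapses. -/
def IsCore (K K₀ : Cplx V) : Prop := MinimalCplx K₀ ∧ StrongCollapses K K₀

/-- Same strong homotopy type: joined by a finite sequence of strong collapses,
strong expansions and simplicial isomorphisms. (In the abstract setting, where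
new vertices may be created freely, isomorphisms are generated by collapses and
expansions; over a fixed ambient vertex type they must be added as moves.) -/
def SameSHT (K L : Cplx V) : Prop :=
  Relation.ReflTransGen
    (fun A B => ElemStrongCollapse A B ∨ ElemStrongCollapse B A ∨ Isomorphic A B) K L

/-- `K` is vertex-homogeneous: its automorphism group acts transitively on vertices. -/
def VertexHomog (K : Cplx V) : Prop :=
  ∀ v w, IsVertex K v → IsVertex K w → ∃ φ : V → V, IsIsoMap K K φ ∧ φ v = w

/-! ### The nerve -/

/-- The maximal faces of `K`. -/
def maxFaces (K : Cplx V) : Finset (Finset V) :=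
  K.faces.filter fun σ => ∀ τ ∈ K.faces, σ ⊆ τ → σ = τ

/-- The nerve of `K`: vertices are the maximal simplices of `K`; a nonempty set
of maximal simplices is a face iff the simplices have a common vertex. -/
def nerve (K : Cplx V) : Cplx (Finset V) where
  faces := (maxFaces K).powerset.filter fun S => S.Nonempty ∧ ∃ v, ∀ σ ∈ S, v ∈ σ
  nonempty_of_mem := fun S h => (Finset.mem_filter.mp h).2.1
  down_closed := by
    intro S T hS hsub hne
    rw [Finset.mem_filter, Finset.mem_powerset] at hS ⊢
    obtain ⟨hpow, -, v, hv⟩ := hS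
    exact ⟨hsub.trans hpow, hne, v, fun σ hσ => hv σ (hsub hσ)⟩

/-- Iterated ambient vertex types for iterated nerves. -/
def iterV (V : Type) : ℕ → Type := fun n => Nat.rec V (fun _ T => Finset T) n

/-- The iterated nerve `Nⁿ(K)` (with `N⁰(K) = K`). -/
def iterNerve (K : Cplx V) : (n : ℕ) → Cplx (iterV V n)
  | 0 => K
  | n + 1 => nerve (iterNerve K n)

/-- A complex consists of a single vertex. -/
def IsPoint (K : Cplx V) : Prop := ∃ v, K.faces = {{v}}

/-! ### Joins -/

/-- The left part of a set of vertices of `V ⊕ W`. -/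
def lefts (ρ : Finset (V ⊕ W)) : Finset V :=
  ρ.preimage Sum.inl Sum.inl_injective.injOn

/-- The right part of a set of vertices of `V ⊕ W`. -/
def rights (ρ : Finset (V ⊕ W)) : Finset W :=
  ρ.preimage Sum.inr Sum.inr_injective.injOn

lemma lefts_union_rights (ρ : Finset (V ⊕ W)) :
    (lefts ρ).image Sum.inl ∪ (rights ρ).image Sum.inr = ρ := by
  ext x
  cases x with
  | inl v => simp [lefts, rights]
  | inr w => simp [lefts, rights]

lemma lefts_eq (σ : Finset V) (τ : Finset W) :
    lefts (σ.image Sum.inl ∪ τ.image Sum.inr) = σ := by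
  ext v; simp [lefts]

lemma rights_eq (σ : Finset V) (τ : Finset W) :
    rights (σ.image Sum.inl ∪ τ.image Sum.inr) = τ := by
  ext w; simp [rights]

/-- The faces of the join `K * L`. -/
def joinFaces (K : Cplx V) (L : Cplx W) : Finset (Finset (V ⊕ W)) :=
  (((insert ∅ K.faces) ×ˢ (insert ∅ L.faces)).image
    (fun p => p.1.image Sum.inl ∪ p.2.image Sum.inr)).erase ∅

lemma mem_joinFaces {K : Cplx V} {L : Cplx W} {ρ : Finset (V ⊕ W)} :
    ρ ∈ joinFaces K L ↔
      ρ.Nonempty ∧ lefts ρ ∈ insert ∅ K.faces ∧ rights ρ ∈ insert ∅ L.faces := by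
  unfold joinFaces
  constructor
  · intro h
    have hne : ρ ≠ ∅ := Finset.ne_of_mem_erase h
    have h' := Finset.mem_of_mem_erase h
    rw [Finset.mem_image] at h'
    obtain ⟨p, hp, hρ⟩ := h'
    rw [Finset.mem_product] at hp
    subst hρ
    rw [lefts_eq, rights_eq]
    exact ⟨Finset.nonempty_iff_ne_empty.mpr hne, hp.1, hp.2⟩
  · rintro ⟨hne, hl, hr⟩
    apply Finset.mem_erase.mpr
    refine ⟨Finset.nonempty_iff_ne_empty.mp hne, ?_⟩
    rw [Finset.mem_image]
    exact ⟨(lefts ρ, rights ρ), Finset.mem_product.mpr ⟨hl, hr⟩, lefts_union_rights ρ⟩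

/-- The simplicial join `K * L` of complexes with disjoint vertex sets
(realized on the disjoint sum of the ambient types). -/
def join (K : Cplx V) (L : Cplx W) : Cplx (V ⊕ W) where
  faces := joinFaces K L
  nonempty_of_mem := fun ρ h => (mem_joinFaces.mp h).1
  down_closed := by
    intro ρ ρ' hρ hsub hne
    obtain ⟨-, hl, hr⟩ := mem_joinFaces.mp hρ
    apply mem_joinFaces.mpr
    refine ⟨hne, ?_, ?_⟩
    · rcases Finset.eq_empty_or_nonempty (lefts ρ') with h0 | h1
      · rw [h0]; exact Finset.mem_insert_self _ _
      · have hsubl : lefts ρ' ⊆ lefts ρ := by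
          intro v hv
          simp only [lefts, Finset.mem_preimage] at hv ⊢
          exact hsub hv
        have hKf : lefts ρ ∈ K.faces := by
          rcases Finset.mem_insert.mp hl with h | h
          · obtain ⟨v, hv⟩ := h1
            exact absurd (hsubl hv) (by simp [h])
          · exact h
        exact Finset.mem_insert.mpr (Or.inr (K.down_closed hKf hsubl h1))
    · rcases Finset.eq_empty_or_nonempty (rights ρ') with h0 | h1
      · rw [h0]; exact Finset.mem_insert_self _ _
      · have hsubr : rights ρ' ⊆ rights ρ := by
          intro w hw
          simp only [rights, Finset.mem_preimage] at hw ⊢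
          exact hsub hw
        have hLf : rights ρ ∈ L.faces := by
          rcases Finset.mem_insert.mp hr with h | h
          · obtain ⟨w, hw⟩ := h1
            exact absurd (hsubr hw) (by simp [h])
          · exact h
        exact Finset.mem_insert.mpr (Or.inr (L.down_closed hLf hsubr h1))

/-! ### Finite posets (finite T₀-spaces) -/

variable {P : Type} [PartialOrder P]

/-- `x` is a beat point of the finite poset `X`: the points of `X` strictly below
`x` have a maximum, or the points of `X` strictly above `x` have a minimum. -/
def BeatPoint (X : Finset P) (x : P) : Prop :=
  x ∈ X ∧ ((∃ y ∈ X, y < x ∧ ∀ z ∈ X, z < x → z ≤ y) ∨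
    (∃ y ∈ X, x < y ∧ ∀ z ∈ X, x < z → y ≤ z))

/-- Elementary strong collapse of finite posets: removal of a beat point. -/
def ElemPosetStrongCollapse (X Y : Finset P) : Prop :=
  ∃ x, BeatPoint X x ∧ Y = X.erase x

/-- Strong collapse of finite posets: successive removal of beat points. -/
def PosetStrongCollapses : Finset P → Finset P → Prop :=
  Relation.ReflTransGen ElemPosetStrongCollapse

/-- A finite poset is contractible iff it strong collapses to a point (Stong). -/
def PosetContractible (X : Finset P) : Prop := ∃ x, PosetStrongCollapses X {x}

/-- The link `Ĉ_x` of `x` in `X`: the points of `X` comparable with `x` and distinct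
from it. -/
def posetLink (X : Finset P) (x : P) : Finset P :=
  X.filter fun y => y < x ∨ x < y

/-- `x` is a weak point of `X`: its link is contractible. -/
def WeakPoint (X : Finset P) (x : P) : Prop :=
  x ∈ X ∧ PosetContractible (posetLink X x)

/-- Collapse of finite posets: successive removal of weak points. -/
def PosetCollapses : Finset P → Finset P → Prop :=
  Relation.ReflTransGen (fun X Y => ∃ x, WeakPoint X x ∧ Y = X.erase x)

/-- A finite poset is collapsible if it collapses to a point. -/
def PosetCollapsible (X : Finset P) : Prop := ∃ x, PosetCollapses X {x}

/-- The order complex of a finite poset: faces are the nonempty chains. -/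
def orderCplx (X : Finset P) : Cplx P where
  faces := X.powerset.filter fun σ => σ.Nonempty ∧ IsChain (· ≤ ·) (σ : Set P)
  nonempty_of_mem := fun σ h => (Finset.mem_filter.mp h).2.1
  down_closed := by
    intro σ τ hσ hsub hne
    rw [Finset.mem_filter, Finset.mem_powerset] at hσ ⊢
    exact ⟨hsub.trans hσ.1, hne, hσ.2.2.mono (Finset.coe_subset.mpr hsub)⟩

/-- The barycentric subdivision of a complex: the order complex of its poset of
faces (the face poset, ordered by inclusion). -/
def sd (K : Cplx V) : Cplx (Finset V) := orderCplx K.faces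

/-- Homotopy of order-preserving maps between finite posets: being joined by a
fence in the pointwise order. -/
def PosetHomotopic {X Y : Type} [Preorder X] [Preorder Y] (f g : X →o Y) : Prop :=
  Relation.ReflTransGen (fun p q : X →o Y => p ≤ q ∨ q ≤ p) f g

/-- Homotopy equivalence of finite posets. -/
def PosetHomotopyEquiv (X Y : Type) [Preorder X] [Preorder Y] : Prop :=
  ∃ (f : X →o Y) (g : Y →o X),
    PosetHomotopic (g.comp f) OrderHom.id ∧ PosetHomotopic (f.comp g) OrderHom.id

/-! ### Classical collapses and n-collapses -/

/-- Elementary (classical) simplicial collapse: removal of a free face `σ`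
together with the unique face `τ` properly containing it. -/
def ElemCollapse (K L : Cplx V) : Prop :=
  ∃ σ τ : Finset V, σ ∈ K.faces ∧ τ ∈ K.faces ∧ σ ⊂ τ ∧
    (∀ ρ ∈ K.faces, σ ⊂ ρ → ρ = τ) ∧ L.faces = K.faces \ {σ, τ}

/-- Classical simplicial collapse. -/
def Collapses : Cplx V → Cplx V → Prop := Relation.ReflTransGen ElemCollapse

/-- A complex is collapsible if it collapses to a point. -/
def Collapsible (K : Cplx V) : Prop := ∃ v, Collapses K (pt v)

/-- `n`-collapses: a `0`-collapse is a strong collapse; an `(n+1)`-collapse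
successively deletes vertices whose links are `n`-collapsible. -/
def NCollapses : ℕ → Cplx V → Cplx V → Prop
  | 0 => StrongCollapses
  | n + 1 => Relation.ReflTransGen
      (fun K L => ∃ v, (∃ w, NCollapses n (linkCplx K v) (pt w)) ∧ L = delete K v)

/-- `K` is `n`-collapsible: it `n`-collapses to a single vertex. -/
def NCollapsible (n : ℕ) (K : Cplx V) : Prop := ∃ v, NCollapses n K (pt v)

/-- `K` is non-evasive: it is `n`-collapsible for some `n`. -/
def NonEvasive (K : Cplx V) : Prop := ∃ n, NCollapsible n K

end

/-! ### Auxiliary development for Statement 11 -/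

noncomputable section

attribute [local instance 2000] Classical.propDecidable

theorem Cplx.ext' {K L : Cplx V} (h : K.faces = L.faces) : K = L := by
  cases K; cases L; simpa using h

/-- Comparability of finite sets. -/
def cmpr (a b : Finset V) : Prop := a ≠ b ∧ (a ⊆ b ∨ b ⊆ a)

lemma cmpr_symm {a b : Finset V} (h : cmpr a b) : cmpr b a := ⟨h.1.symm, h.2.symm⟩

lemma cmpr_irrefl (a : Finset V) : ¬ cmpr a a := fun h => h.1 rfl

/-- `x` is dominated by `y` in the comparability graph of `X`. -/
def gdomBy (X : Finset (Finset V)) (x y : Finset V) : Prop :=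
  x ∈ X ∧ y ∈ X ∧ cmpr x y ∧ ∀ z ∈ X, cmpr x z → (cmpr y z ∨ z = y)

/-- One dismantling step. -/
def GStep (X Y : Finset (Finset V)) : Prop := ∃ x y, gdomBy X x y ∧ Y = X.erase x

/-- Dismantling reduction. -/
def Red : Finset (Finset V) → Finset (Finset V) → Prop := Relation.ReflTransGen GStep

/-- Dismantlability to a single point. -/
inductive DismI : Finset (Finset V) → Prop
  | pt (c : Finset V) : DismI {c}
  | step {X : Finset (Finset V)} {x y : Finset V}
      (h : gdomBy X x y) (hd : DismI (X.erase x)) : DismI X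

lemma DismI.nonempty {X : Finset (Finset V)} (h : DismI X) : X.Nonempty := by
  cases h with
  | pt c => exact ⟨c, Finset.mem_singleton_self c⟩
  | step h hd => exact ⟨_, h.1⟩

section OrderCplxBridge

lemma mem_orderCplx {X σ : Finset (Finset V)} :
    σ ∈ (orderCplx X).faces ↔
      σ ⊆ X ∧ σ.Nonempty ∧ IsChain (· ≤ ·) (σ : Set (Finset V)) := by
  simp [orderCplx, Finset.mem_filter, Finset.mem_powerset, and_assoc]

lemma mem_link_orderCplx {X : Finset (Finset V)} {x : Finset V} {C : Finset (Finset V)} :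
    C ∈ link (orderCplx X) x ↔
      C ∈ (orderCplx X).faces ∧ x ∉ C ∧ insert x C ∈ (orderCplx X).faces := by
  simp [link, Finset.mem_filter, and_assoc]

lemma cmpr_of_le_or_le {a b : Finset V} (hne : a ≠ b) (h : a ≤ b ∨ b ≤ a) : cmpr a b :=
  ⟨hne, by simpa [Finset.le_iff_subset] using h⟩

lemma cmpr.le_or_le {a b : Finset V} (h : cmpr a b) : a ≤ b ∨ b ≤ a := by
  simpa [Finset.le_iff_subset] using h.2

lemma singleton_chain (a : Finset V) :
    IsChain (· ≤ ·) ((({a} : Finset (Finset V))) : Set (Finset V)) := by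
  rw [Finset.coe_singleton]
  exact Set.Subsingleton.isChain (Set.subsingleton_singleton)

lemma delete_orderCplx (X : Finset (Finset V)) (x : Finset V) :
    delete (orderCplx X) x = orderCplx (X.erase x) := by
  apply Cplx.ext'
  ext σ
  simp only [delete, Finset.mem_filter, mem_orderCplx]
  constructor
  · rintro ⟨⟨h1, h2, h3⟩, h4⟩
    exact ⟨Finset.subset_erase.mpr ⟨h1, h4⟩, h2, h3⟩
  · rintro ⟨h1, h2, h3⟩
    rcases Finset.subset_erase.mp h1 with ⟨h1', h4⟩
    exact ⟨⟨h1', h2, h3⟩, h4⟩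

lemma dominated_orderCplx {X : Finset (Finset V)} {x : Finset V} :
    Dominated (orderCplx X) x ↔ ∃ y, gdomBy X x y := by
  constructor
  · rintro ⟨a, h1, h2⟩
    rw [mem_link_orderCplx, mem_orderCplx, mem_orderCplx] at h1
    obtain ⟨⟨ha, -, -⟩, hxa, hins, -, hchain⟩ := h1
    have haX : a ∈ X := ha (Finset.mem_singleton_self a)
    have hxX : x ∈ X := hins (Finset.mem_insert_self x {a})
    have hxa' : x ≠ a := by
      intro h; exact hxa (h ▸ Finset.mem_singleton_self a)
    have hcxa : cmpr x a := by
      refine cmpr_of_le_or_le hxa' (hchain ?_ ?_ hxa')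
      · simp
      · simp
    refine ⟨a, hxX, haX, hcxa, ?_⟩
    intro z hzX hxz
    have hzlink : ({z} : Finset (Finset V)) ∈ link (orderCplx X) x := by
      rw [mem_link_orderCplx, mem_orderCplx, mem_orderCplx]
      refine ⟨⟨Finset.singleton_subset_iff.mpr hzX, ⟨z, by simp⟩, singleton_chain z⟩,
        Finset.notMem_singleton.mpr hxz.1, ?_, ⟨x, by simp⟩, ?_⟩
      · intro u hu
        rcases Finset.mem_insert.mp hu with rfl | hu
        · exact hxX
        · rw [Finset.mem_singleton] at hu; subst hu; exact hzX
      · rw [Finset.coe_insert, Finset.coe_singleton]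
        exact (Set.Subsingleton.isChain Set.subsingleton_singleton).insert
          (fun b hb _ => by rw [Set.mem_singleton_iff] at hb; subst hb; exact hxz.le_or_le)
    have := h2 _ hzlink
    rw [mem_link_orderCplx, mem_orderCplx] at this
    obtain ⟨⟨-, -, hch⟩, -, -⟩ := this
    by_cases hza : z = a
    · exact Or.inr hza
    · left
      refine cmpr_symm (cmpr_of_le_or_le hza ?_)
      refine hch ?_ ?_ hza
      · simp
      · simp
  · rintro ⟨y, hxX, hyX, hcxy, hdom⟩
    refine ⟨y, ?_, ?_⟩
    · rw [mem_link_orderCplx, mem_orderCplx, mem_orderCplx]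
      refine ⟨⟨Finset.singleton_subset_iff.mpr hyX, ⟨y, by simp⟩, singleton_chain y⟩,
        Finset.notMem_singleton.mpr hcxy.1, ?_, ⟨x, by simp⟩, ?_⟩
      · intro u hu
        rcases Finset.mem_insert.mp hu with rfl | hu
        · exact hxX
        · rw [Finset.mem_singleton] at hu; subst hu; exact hyX
      · rw [Finset.coe_insert, Finset.coe_singleton]
        exact (Set.Subsingleton.isChain Set.subsingleton_singleton).insert
          (fun b hb _ => by rw [Set.mem_singleton_iff] at hb; subst hb; exact hcxy.le_or_le)
    · intro C hC
      rw [mem_link_orderCplx, mem_orderCplx, mem_orderCplx] at hC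
      obtain ⟨⟨hCX, hCne, hCch⟩, hxC, hinsX, -, hinsch⟩ := hC
      have hyx : y ≠ x := Ne.symm hcxy.1
      have hzC : ∀ z ∈ C, cmpr y z ∨ z = y := by
        intro z hzC
        have hzx : z ≠ x := fun h => hxC (h ▸ hzC)
        have : cmpr x z := by
          refine cmpr_symm (cmpr_of_le_or_le hzx ?_)
          refine hinsch ?_ ?_ hzx
          · simp [hzC]
          · simp
        exact hdom z (hCX hzC) this
      have hchainyC : IsChain (· ≤ ·) ((insert y C : Finset (Finset V)) : Set (Finset V)) := by
        rw [Finset.coe_insert]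
        refine hCch.insert ?_
        intro b hb hne
        rcases hzC b hb with h | h
        · exact h.le_or_le
        · exact absurd h.symm hne
      rw [mem_link_orderCplx, mem_orderCplx, mem_orderCplx]
      refine ⟨⟨?_, ⟨y, Finset.mem_insert_self y C⟩, hchainyC⟩, ?_, ?_, ⟨x, by simp⟩, ?_⟩
      · intro u hu
        rcases Finset.mem_insert.mp hu with rfl | hu
        · exact hyX
        · exact hCX hu
      · intro h
        rcases Finset.mem_insert.mp h with h | h
        · exact hyx h.symm
        · exact hxC h
      · intro u hu
        rcases Finset.mem_insert.mp hu with rfl | hu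
        · exact hxX
        · rcases Finset.mem_insert.mp hu with rfl | hu
          · exact hyX
          · exact hCX hu
      · rw [Finset.coe_insert]
        refine hchainyC.insert ?_
        intro b hb hne
        rw [Finset.coe_insert, Set.mem_insert_iff] at hb
        rcases hb with rfl | hb
        · exact hcxy.le_or_le
        · have hbx : b ≠ x := Ne.symm hne
          have : cmpr x b := by
            refine cmpr_symm (cmpr_of_le_or_le hbx ?_)
            refine hinsch ?_ ?_ hbx
            · simp [hb]
            · simp
          exact this.le_or_le

lemma orderCplx_singleton (c : Finset V) :
    orderCplx ({c} : Finset (Finset V)) = pt c := by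
  apply Cplx.ext'
  ext σ
  simp only [pt, Finset.mem_singleton, mem_orderCplx]
  constructor
  · rintro ⟨h1, h2, -⟩
    rcases Finset.subset_singleton_iff.mp h1 with h | h
    · exact absurd h (Finset.nonempty_iff_ne_empty.mp h2)
    · exact h
  · rintro rfl
    exact ⟨Finset.Subset.refl _, Finset.singleton_nonempty _, singleton_chain _⟩

lemma orderCplx_eq_pt {Y : Finset (Finset V)} {c : Finset V}
    (h : orderCplx Y = pt c) : Y = {c} := by
  have hfaces : (orderCplx Y).faces = {({c} : Finset (Finset V))} := by rw [h]; rfl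
  ext y
  simp only [Finset.mem_singleton]
  constructor
  · intro hy
    have : ({y} : Finset (Finset V)) ∈ (orderCplx Y).faces := by
      rw [mem_orderCplx]
      exact ⟨Finset.singleton_subset_iff.mpr hy, ⟨y, by simp⟩, singleton_chain y⟩
    rw [hfaces, Finset.mem_singleton] at this
    exact Finset.singleton_injective this
  · rintro rfl
    have h2 : ({y} : Finset (Finset V)) ∈ (orderCplx Y).faces := by
      rw [hfaces]; exact Finset.mem_singleton_self _
    rw [mem_orderCplx] at h2
    exact h2.1 (Finset.mem_singleton_self y)

end OrderCplxBridge

end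
noncomputable section

attribute [local instance 2000] Classical.propDecidable

section RedBridge

lemma Red_to_SC {X Y : Finset (Finset V)} (h : Red X Y) :
    StrongCollapses (orderCplx X) (orderCplx Y) := by
  induction h with
  | refl => exact Relation.ReflTransGen.refl
  | tail hab hbc ih =>
    obtain ⟨x, y, hg, rfl⟩ := hbc
    refine Relation.ReflTransGen.tail ih ⟨x, ?_, (delete_orderCplx _ x).symm⟩
    exact dominated_orderCplx.mpr ⟨y, hg⟩

lemma SC_to_Red {X : Finset (Finset V)} {L : Cplx (Finset V)}
    (h : StrongCollapses (orderCplx X) L) : ∃ Y, L = orderCplx Y ∧ Red X Y := by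
  have H : ∀ (M L : Cplx (Finset V)), StrongCollapses M L →
      ∀ X, M = orderCplx X → ∃ Y, L = orderCplx Y ∧ Red X Y := by
    intro M L h
    induction h using Relation.ReflTransGen.head_induction_on with
    | refl => exact fun X hX => ⟨X, hX, Relation.ReflTransGen.refl⟩
    | head h' hcb ih =>
      rintro X rfl
      obtain ⟨σ, hdom, rfl⟩ := h'
      obtain ⟨y, hg⟩ := dominated_orderCplx.mp hdom
      obtain ⟨Y, hL, hR⟩ := ih (X.erase σ) (delete_orderCplx X σ)
      exact ⟨Y, hL, Relation.ReflTransGen.head ⟨σ, y, hg, rfl⟩ hR⟩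
  exact H _ _ h X rfl

lemma Red_to_DismI {X : Finset (Finset V)} {c : Finset V} (h : Red X {c}) : DismI X := by
  induction h using Relation.ReflTransGen.head_induction_on with
  | refl => exact DismI.pt c
  | head h' _ ih =>
    obtain ⟨x, y, hg, rfl⟩ := h'
    exact DismI.step hg ih

end RedBridge

section Batch

lemma batch (U : Finset (Finset V)) :
    ∀ n (T : Finset (Finset V)), T.card ≤ n → (∀ t ∈ T, t ∉ U) →
      (∀ T' ⊆ T, T'.Nonempty → ∃ x ∈ T', ∃ y, gdomBy (U ∪ T') x y) →
      Red (U ∪ T) U := by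
  intro n
  induction n with
  | zero =>
    intro T hT _ _
    have : T = ∅ := Finset.card_eq_zero.mp (Nat.le_zero.mp hT)
    subst this
    rw [Finset.union_empty]
    exact Relation.ReflTransGen.refl
  | succ n ih =>
    intro T hT hdisj hdom
    rcases T.eq_empty_or_nonempty with rfl | hne
    · rw [Finset.union_empty]
      exact Relation.ReflTransGen.refl
    · obtain ⟨x, hxT, y, hg⟩ := hdom T (Finset.Subset.refl T) hne
      have herase : (U ∪ T).erase x = U ∪ T.erase x := by
        rw [Finset.erase_union_distrib, Finset.erase_eq_of_notMem (hdisj x hxT)]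
      refine Relation.ReflTransGen.head (b := U ∪ T.erase x) ⟨x, y, hg, herase.symm⟩ ?_
      refine ih (T.erase x) ?_ (fun t ht => hdisj t (Finset.mem_of_mem_erase ht)) ?_
      · rw [Finset.card_erase_of_mem hxT]
        exact Nat.sub_le_sub_right hT 1
      · intro T' hT' hTne
        exact hdom T' (hT'.trans (Finset.erase_subset x T)) hTne

end Batch

end
noncomputable section

attribute [local instance 2000] Classical.propDecidable

lemma domDel {K : Cplx V} {v v' : V} (h : DominatedBy K v v') :
    Red K.faces (delete K v).faces := by
  obtain ⟨hv', hclosed⟩ := h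
  simp only [link, Finset.mem_filter] at hv'
  obtain ⟨hv'F, hvv', hvv'F⟩ := hv'
  have hne : v' ≠ v := fun h => hvv' (h ▸ Finset.mem_singleton_self v')
  -- inserting v' into any face containing v stays a face
  have Hins : ∀ σ ∈ K.faces, v ∈ σ → insert v' σ ∈ K.faces := by
    intro σ hσ hvσ
    by_cases hers : (σ.erase v).Nonempty
    · have hlk : σ.erase v ∈ link K v := by
        simp only [link, Finset.mem_filter]
        exact ⟨K.down_closed hσ (Finset.erase_subset _ _) hers,
          Finset.notMem_erase _ _, by rw [Finset.insert_erase hvσ]; exact hσ⟩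
      have h2 := hclosed _ hlk
      simp only [link, Finset.mem_filter] at h2
      have h3 := h2.2.2
      have heq : insert v (insert v' (σ.erase v)) = insert v' σ := by
        rw [Finset.insert_comm, Finset.insert_erase hvσ]
      rwa [heq] at h3
    · have hσv : σ = {v} := by
        rw [Finset.not_nonempty_iff_eq_empty] at hers
        apply Finset.Subset.antisymm
        · intro u hu
          rcases eq_or_ne u v with rfl | hu'
          · exact Finset.mem_singleton_self u
          · exact absurd (Finset.mem_erase.mpr ⟨hu', hu⟩) (by rw [hers]; exact Finset.notMem_empty u)
        · exact Finset.singleton_subset_iff.mpr hvσ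
      subst hσv
      have : insert v' ({v} : Finset V) = insert v ({v'} : Finset V) := Finset.pair_comm v' v
      rw [this]
      exact hvv'F
  set F := K.faces with hF
  set A := F.filter (fun σ => v ∈ σ ∧ v' ∉ σ) with hA
  set B := F.filter (fun σ => v ∈ σ ∧ v' ∈ σ) with hB
  set D := F.filter (fun σ => v ∉ σ) with hD
  have hDfaces : (delete K v).faces = D := by
    rw [hD]; ext σ; simp only [delete, Finset.mem_filter]; rfl
  have hsplit : F = (D ∪ B) ∪ A := by
    ext σ
    simp only [hA, hB, hD, Finset.mem_union, Finset.mem_filter]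
    by_cases h1 : v ∈ σ <;> by_cases h2 : v' ∈ σ <;> tauto
  have hred1 : Red ((D ∪ B) ∪ A) (D ∪ B) := by
    refine batch (D ∪ B) A.card A (le_refl _) ?_ ?_
    · intro t ht
      rw [hA, Finset.mem_filter] at ht
      intro hmem
      rcases Finset.mem_union.mp hmem with hD' | hB'
      · rw [hD, Finset.mem_filter] at hD'; exact hD'.2 ht.2.1
      · rw [hB, Finset.mem_filter] at hB'; exact ht.2.2 hB'.2.2
    · intro T' hT' hTne
      obtain ⟨x, hxT, hmax⟩ := T'.exists_max_image (fun s => s.card) hTne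
      have hxA := hT' hxT
      rw [hA, Finset.mem_filter] at hxA
      obtain ⟨hxF, hvx, hv'x⟩ := hxA
      refine ⟨x, hxT, insert v' x, Finset.mem_union_right _ hxT, ?_, ?_, ?_⟩
      · apply Finset.mem_union_left
        apply Finset.mem_union_right
        rw [hB, Finset.mem_filter]
        exact ⟨Hins x hxF hvx, Finset.mem_insert_of_mem hvx, Finset.mem_insert_self _ _⟩
      · exact ⟨fun hcontra => hv'x (hcontra ▸ Finset.mem_insert_self v' x),
          Or.inl (Finset.subset_insert _ _)⟩
      · intro z hz hcz
        rcases hcz.2 with hzx | hxz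
        · -- x ⊆ z, z ≠ x, so x ⊊ z
          have hss : x ⊂ z := Finset.ssubset_iff_subset_ne.mpr ⟨hzx, hcz.1⟩
          rcases Finset.mem_union.mp hz with hz' | hzT
          · rcases Finset.mem_union.mp hz' with hzD | hzB
            · rw [hD, Finset.mem_filter] at hzD
              exact absurd (hss.1 hvx) hzD.2
            · rw [hB, Finset.mem_filter] at hzB
              by_cases hzy : z = insert v' x
              · exact Or.inr hzy
              · left
                refine ⟨Ne.symm hzy, Or.inl ?_⟩
                exact Finset.insert_subset hzB.2.2 hss.1
          · exact absurd (Finset.card_lt_card hss) (Nat.not_lt.mpr (hmax z hzT))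
        · -- z ⊆ x
          left
          refine ⟨?_, Or.inr (hxz.trans (Finset.subset_insert _ _))⟩
          intro hcontra
          exact hv'x (hxz (hcontra ▸ Finset.mem_insert_self v' x))
  have hred2 : Red (D ∪ B) D := by
    refine batch D B.card B (le_refl _) ?_ ?_
    · intro t ht hmem
      rw [hB, Finset.mem_filter] at ht
      rw [hD, Finset.mem_filter] at hmem
      exact hmem.2 ht.2.1
    · intro T' hT' hTne
      obtain ⟨x, hxT, hmin⟩ := T'.exists_min_image (fun s => s.card) hTne
      have hxB := hT' hxT
      rw [hB, Finset.mem_filter] at hxB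
      obtain ⟨hxF, hvx, hv'x⟩ := hxB
      have hyD : x.erase v ∈ D := by
        rw [hD, Finset.mem_filter]
        exact ⟨K.down_closed hxF (Finset.erase_subset _ _)
          ⟨v', Finset.mem_erase.mpr ⟨hne, hv'x⟩⟩, Finset.notMem_erase _ _⟩
      refine ⟨x, hxT, x.erase v, Finset.mem_union_right _ hxT, Finset.mem_union_left _ hyD, ?_, ?_⟩
      · exact ⟨fun hcontra => (Finset.notMem_erase v x) (hcontra ▸ hvx),
          Or.inr (Finset.erase_subset _ _)⟩
      · intro z hz hcz
        rcases hcz.2 with hzx | hxz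
        · -- x ⊆ z
          left
          refine ⟨?_, Or.inl ((Finset.erase_subset _ _).trans hzx)⟩
          intro hcontra
          exact (Finset.notMem_erase v x) (hcontra ▸ hzx hvx)
        · -- z ⊆ x, z ≠ x hence z ⊊ x
          have hss : z ⊂ x := Finset.ssubset_iff_subset_ne.mpr ⟨hxz, hcz.1.symm⟩
          rcases Finset.mem_union.mp hz with hzD | hzT
          · rw [hD, Finset.mem_filter] at hzD
            by_cases hzy : z = x.erase v
            · exact Or.inr hzy
            · exact Or.inl ⟨Ne.symm hzy, Or.inr (Finset.subset_erase.mpr ⟨hxz, hzD.2⟩)⟩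
          · exact absurd (Finset.card_lt_card hss) (Nat.not_lt.mpr (hmin z hzT))
  rw [hDfaces, hsplit]
  exact Relation.ReflTransGen.trans hred1 hred2

lemma SCK_to_Red {K L : Cplx V} (h : StrongCollapses K L) : Red K.faces L.faces := by
  induction h with
  | refl => exact Relation.ReflTransGen.refl
  | tail hab hbc ih =>
    obtain ⟨v, ⟨v', hdom⟩, rfl⟩ := hbc
    exact Relation.ReflTransGen.trans ih (domDel hdom)

end
noncomputable section

attribute [local instance 2000] Classical.propDecidable

lemma cmpr_comm {a b : Finset V} : cmpr a b ↔ cmpr b a := ⟨cmpr_symm, cmpr_symm⟩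

lemma gdomBy_erase {X : Finset (Finset V)} {a b c : Finset V}
    (h : gdomBy X a b) (hac : a ≠ c) (hbc : b ≠ c) : gdomBy (X.erase c) a b := by
  obtain ⟨haX, hbX, hab, hdom⟩ := h
  exact ⟨Finset.mem_erase.mpr ⟨hac, haX⟩, Finset.mem_erase.mpr ⟨hbc, hbX⟩, hab,
    fun z hz hcz => hdom z (Finset.mem_of_mem_erase hz) hcz⟩

/-- Transport of dismantlability along the swap of two "twin" elements. -/
lemma swapDismI {x z : Finset V} (X : Finset (Finset V)) (hxz : x ≠ z)
    (tw : ∀ u ∈ X, u ≠ x → u ≠ z → (cmpr u x ↔ cmpr u z)) :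
    ∀ Y, DismI Y → Y ⊆ X → z ∉ Y →
      DismI (Y.image (fun u => if u = x then z else if u = z then x else u)) := by
  set s : Finset V → Finset V := fun u => if u = x then z else if u = z then x else u with hs
  have hsx : s x = z := by simp [hs]
  have hsz : s z = x := by simp [hs, hxz.symm]
  have hsother : ∀ u, u ≠ x → u ≠ z → s u = u := by
    intro u h1 h2; simp [hs, h1, h2]
  have hinv : ∀ u, s (s u) = u := by
    intro u
    rcases eq_or_ne u x with rfl | h1
    · rw [hsx, hsz]
    · rcases eq_or_ne u z with rfl | h2
      · rw [hsz, hsx]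
      · rw [hsother u h1 h2, hsother u h1 h2]
  have hinj : Function.Injective s := by
    intro a b hab
    have h2 := congrArg s hab
    rwa [hinv, hinv] at h2
  intro Y hY
  induction hY with
  | pt c =>
    intro _ _
    rw [Finset.image_singleton]
    exact DismI.pt _
  | @step Y a b hg hd ih =>
    intro hsub hzY
    have hcmpiff : ∀ u ∈ Y, ∀ u' ∈ Y, (cmpr (s u) (s u') ↔ cmpr u u') := by
      intro u hu u' hu'
      have huz : u ≠ z := fun h => hzY (h ▸ hu)
      have hu'z : u' ≠ z := fun h => hzY (h ▸ hu')
      by_cases hux : u = x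
      · by_cases hu'x : u' = x
        · rw [hux, hu'x, hsx]
          exact iff_of_false (cmpr_irrefl z) (cmpr_irrefl x)
        · rw [hux, hsx, hsother u' hu'x hu'z]
          exact (cmpr_comm.trans (tw u' (hsub hu') hu'x hu'z).symm).trans cmpr_comm
      · by_cases hu'x : u' = x
        · rw [hu'x, hsx, hsother u hux huz]
          exact (tw u (hsub hu) hux huz).symm
        · rw [hsother u hux huz, hsother u' hu'x hu'z]
    obtain ⟨haY, hbY, hab, hdom⟩ := hg
    have hg' : gdomBy (Y.image s) (s a) (s b) := by
      refine ⟨Finset.mem_image_of_mem s haY, Finset.mem_image_of_mem s hbY,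
        (hcmpiff a haY b hbY).mpr hab, ?_⟩
      intro u' hu' hcu
      obtain ⟨u, hu, rfl⟩ := Finset.mem_image.mp hu'
      rcases hdom u hu ((hcmpiff a haY u hu).mp hcu) with h | h
      · exact Or.inl ((hcmpiff b hbY u hu).mpr h)
      · exact Or.inr (congrArg s h)
    have himg : (Y.image s).erase (s a) = (Y.erase a).image s := by
      ext u
      constructor
      · intro hu
        have hne := (Finset.mem_erase.mp hu).1
        obtain ⟨w', hw', rfl⟩ := Finset.mem_image.mp (Finset.mem_of_mem_erase hu)
        exact Finset.mem_image.mpr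
          ⟨w', Finset.mem_erase.mpr ⟨fun h => hne (congrArg s h), hw'⟩, rfl⟩
      · intro hu
        obtain ⟨w', hw', rfl⟩ := Finset.mem_image.mp hu
        have hw2 := Finset.mem_erase.mp hw'
        exact Finset.mem_erase.mpr
          ⟨fun h => hw2.1 (hinj h), Finset.mem_image.mpr ⟨w', hw2.2, rfl⟩⟩
    refine DismI.step hg' ?_
    rw [himg]
    exact ih ((Finset.erase_subset a Y).trans hsub) (fun h => hzY (Finset.mem_of_mem_erase h))

/-- Dismantlability is preserved by removing any dominated element. -/
lemma greedy {X : Finset (Finset V)} (hX : DismI X) :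
    ∀ x y, gdomBy X x y → DismI (X.erase x) := by
  induction hX with
  | pt c =>
    intro x y hg
    obtain ⟨hx, hy, hcmp, -⟩ := hg
    rw [Finset.mem_singleton] at hx hy
    exact absurd (hx.trans hy.symm) hcmp.1
  | @step X z w hzw hd ih =>
    intro x y hxy
    by_cases hxz : x = z
    · subst hxz; exact hd
    have hzx : z ≠ x := Ne.symm hxz
    by_cases hyz : y = z
    · rw [hyz] at hxy
      -- x is dominated by z
      by_cases hwx : w = x
      · rw [hwx] at hzw
        -- twin case: x and z mutually dominating
        have hxzne : x ≠ z := hxz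
        have tw : ∀ u ∈ X, u ≠ x → u ≠ z → (cmpr u x ↔ cmpr u z) := by
          intro u hu hux huz
          constructor
          · intro h
            rcases hxy.2.2.2 u hu (cmpr_symm h) with h2 | h2
            · exact cmpr_symm h2
            · exact absurd h2 huz
          · intro h
            rcases hzw.2.2.2 u hu (cmpr_symm h) with h2 | h2
            · exact cmpr_symm h2
            · exact absurd h2 hux
        have hres := swapDismI X hxzne tw (X.erase z) hd (Finset.erase_subset z X)
          (Finset.notMem_erase z X)
        have himg : (X.erase z).image
            (fun u => if u = x then z else if u = z then x else u) = X.erase x := by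
          ext u
          constructor
          · intro hu
            obtain ⟨w', hw', hwu⟩ := Finset.mem_image.mp hu
            have hw2 := Finset.mem_erase.mp hw'
            by_cases h1 : w' = x
            · rw [h1, if_pos rfl] at hwu
              rw [← hwu]
              exact Finset.mem_erase.mpr ⟨Ne.symm hxzne, hxy.2.1⟩
            · rw [if_neg h1, if_neg hw2.1] at hwu
              rw [← hwu]
              exact Finset.mem_erase.mpr ⟨h1, hw2.2⟩
          · intro hu
            have hu2 := Finset.mem_erase.mp hu
            by_cases h2 : u = z
            · refine Finset.mem_image.mpr ⟨x, Finset.mem_erase.mpr ⟨hxzne, hxy.1⟩, ?_⟩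
              rw [if_pos rfl, h2]
            · refine Finset.mem_image.mpr ⟨u, Finset.mem_erase.mpr ⟨h2, hu2.2⟩, ?_⟩
              rw [if_neg hu2.1, if_neg h2]
        rwa [himg] at hres
      · -- y = z, w ≠ x : in X.erase z, x is dominated by w; in X.erase x, z is dominated by w
        have hwz : w ≠ z := Ne.symm hzw.2.2.1.1
        have hcxw : cmpr x w := by
          rcases hzw.2.2.2 x hxy.1 (cmpr_symm hxy.2.2.1) with h | h
          · exact cmpr_symm h
          · exact absurd h.symm hwx
        have h1 : gdomBy (X.erase z) x w := by
          refine ⟨Finset.mem_erase.mpr ⟨hxz, hxy.1⟩, Finset.mem_erase.mpr ⟨hwz, hzw.2.1⟩,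
            hcxw, ?_⟩
          intro u hu hcu
          have huz : u ≠ z := (Finset.mem_erase.mp hu).1
          have huX : u ∈ X := Finset.mem_of_mem_erase hu
          rcases hxy.2.2.2 u huX hcu with h2 | h2
          · exact hzw.2.2.2 u huX h2
          · exact absurd h2 huz
        have h2 : gdomBy (X.erase x) z w := gdomBy_erase hzw hzx hwx
        refine DismI.step h2 ?_
        have : (X.erase x).erase z = (X.erase z).erase x := by
          ext u; simp only [Finset.mem_erase]; tauto
        rw [this]
        exact ih x w h1
    · by_cases hwx : w = x
      · rw [hwx] at hzw
        -- z dominated by x; x dominated by y, y ≠ z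
        have hyx : y ≠ x := Ne.symm hxy.2.2.1.1
        have h1 : gdomBy (X.erase z) x y := gdomBy_erase hxy hxz hyz
        have hczy : cmpr z y := by
          rcases hxy.2.2.2 z hzw.1 (cmpr_symm hzw.2.2.1) with h | h
          · exact cmpr_symm h
          · exact absurd h.symm hyz
        have h2 : gdomBy (X.erase x) z y := by
          refine ⟨Finset.mem_erase.mpr ⟨hzx, hzw.1⟩, Finset.mem_erase.mpr ⟨hyx, hxy.2.1⟩,
            hczy, ?_⟩
          intro u hu hcu
          have hux : u ≠ x := (Finset.mem_erase.mp hu).1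
          have huX : u ∈ X := Finset.mem_of_mem_erase hu
          rcases hzw.2.2.2 u huX hcu with h2 | h2
          · exact hxy.2.2.2 u huX h2
          · exact absurd h2 hux
        refine DismI.step h2 ?_
        have : (X.erase x).erase z = (X.erase z).erase x := by
          ext u; simp only [Finset.mem_erase]; tauto
        rw [this]
        exact ih x y h1
      · -- generic case
        have h1 : gdomBy (X.erase z) x y := gdomBy_erase hxy hxz hyz
        have h2 : gdomBy (X.erase x) z w := gdomBy_erase hzw hzx hwx
        refine DismI.step h2 ?_
        have : (X.erase x).erase z = (X.erase z).erase x := by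
          ext u; simp only [Finset.mem_erase]; tauto
        rw [this]
        exact ih x y h1

lemma DismI_of_Red {X Y : Finset (Finset V)} (hX : DismI X) (h : Red X Y) : DismI Y := by
  induction h with
  | refl => exact hX
  | tail hab hbc ih =>
    obtain ⟨x, y, hg, rfl⟩ := hbc
    exact greedy ih x y hg

end
noncomputable section

attribute [local instance 2000] Classical.propDecidable

lemma mainCrux (K : Cplx V) :
    ∀ X : Finset (Finset V), DismI X → X ⊆ K.faces →
      (∀ w : V, {w} ∈ K.faces → {w} ∈ X) →
      (∀ ρ ∈ K.faces, ∃ μ ∈ X, ρ ⊆ μ) →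
      (∃ v v', DominatedBy K v v') ∨
        (∀ u u' : V, {u} ∈ K.faces → {u'} ∈ K.faces → u = u') := by
  intro X hX
  induction hX with
  | pt c =>
    intro hsub hsing hcov
    right
    intro u u' hu hu'
    have h1 := hsing u hu
    have h2 := hsing u' hu'
    rw [Finset.mem_singleton] at h1 h2
    exact Finset.singleton_injective (h1.trans h2.symm)
  | @step X x y hg hd ih =>
    intro hsub hsing hcov
    by_cases hx1 : ∃ v : V, x = {v}
    · obtain ⟨v, rfl⟩ := hx1
      left
      obtain ⟨hxX, hyX, hcxy, hdom⟩ := hg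
      have hyF : y ∈ K.faces := hsub hyX
      have hyne : y.Nonempty := K.nonempty_of_mem hyF
      have hvy : v ∈ y := by
        rcases hcxy.2 with h | h
        · exact h (Finset.mem_singleton_self v)
        · exfalso
          rcases Finset.subset_singleton_iff.mp h with h0 | h0
          · exact (Finset.nonempty_iff_ne_empty.mp hyne) h0
          · exact hcxy.1 h0.symm
      have hwex : ∃ w ∈ y, w ≠ v := by
        by_contra hc
        push_neg at hc
        have hsubv : y ⊆ {v} := fun u hu => Finset.mem_singleton.mpr (hc u hu)
        rcases Finset.subset_singleton_iff.mp hsubv with h0 | h0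
        · exact (Finset.nonempty_iff_ne_empty.mp hyne) h0
        · exact hcxy.1 h0.symm
      obtain ⟨w, hwy, hwv⟩ := hwex
      refine ⟨v, w, ?_, ?_⟩
      · simp only [link, Finset.mem_filter]
        refine ⟨K.down_closed hyF (Finset.singleton_subset_iff.mpr hwy)
          ⟨w, Finset.mem_singleton_self w⟩, Finset.notMem_singleton.mpr (Ne.symm hwv), ?_⟩
        refine K.down_closed hyF ?_ ⟨v, Finset.mem_insert_self v {w}⟩
        intro u hu
        rcases Finset.mem_insert.mp hu with rfl | hu
        · exact hvy
        · rw [Finset.mem_singleton] at hu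
          exact hu ▸ hwy
      · intro σ hσ
        simp only [link, Finset.mem_filter] at hσ ⊢
        obtain ⟨hσF, hvσ, hinsσ⟩ := hσ
        have hσne : σ.Nonempty := K.nonempty_of_mem hσF
        obtain ⟨μ, hμX, hρμ⟩ := hcov (insert v σ) hinsσ
        have hμF : μ ∈ K.faces := hsub hμX
        have hvμ : v ∈ μ := hρμ (Finset.mem_insert_self v σ)
        have hwμ : insert w μ ∈ K.faces := by
          by_cases hμy : μ = y
          · rw [hμy, Finset.insert_eq_of_mem hwy]
            exact hyF
          · have hcxμ : cmpr {v} μ := by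
              refine ⟨?_, Or.inl (Finset.singleton_subset_iff.mpr hvμ)⟩
              intro hcontra
              rw [← hcontra] at hρμ
              obtain ⟨u, hu⟩ := hσne
              have : u ∈ ({v} : Finset V) := hρμ (Finset.mem_insert_of_mem hu)
              rw [Finset.mem_singleton] at this
              exact hvσ (this ▸ hu)
            rcases hdom μ hμX hcxμ with h | h
            · rcases h.2 with h2 | h2
              · rw [Finset.insert_eq_of_mem (h2 hwy)]
                exact hμF
              · exact K.down_closed hyF (Finset.insert_subset hwy h2)
                  ⟨w, Finset.mem_insert_self w μ⟩
            · exact absurd h hμy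
        have hkey : insert w (insert v σ) ∈ K.faces :=
          K.down_closed hwμ (Finset.insert_subset (Finset.mem_insert_self w μ)
            (hρμ.trans (Finset.subset_insert w μ))) ⟨w, Finset.mem_insert_self _ _⟩
        refine ⟨?_, ?_, ?_⟩
        · refine K.down_closed hkey ?_ ⟨w, Finset.mem_insert_self w σ⟩
          intro u hu
          rcases Finset.mem_insert.mp hu with rfl | hu
          · exact Finset.mem_insert_self u _
          · exact Finset.mem_insert_of_mem (Finset.mem_insert_of_mem hu)
        · intro hc
          rcases Finset.mem_insert.mp hc with h | h
          · exact hwv h.symm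
          · exact hvσ h
        · rw [Finset.insert_comm]
          exact hkey
    · obtain ⟨hxX, hyX, hcxy, hdom⟩ := hg
      have hxF := hsub hxX
      have hxy : x ⊆ y := by
        rcases hcxy.2 with h | h
        · exact h
        · by_cases hall : ∀ u ∈ x, u ∈ y
          · exact absurd (Finset.Subset.antisymm hall h) hcxy.1
          · exfalso
            push_neg at hall
            obtain ⟨u₀, hu₀x, hu₀y⟩ := hall
            have hu₀F : {u₀} ∈ K.faces := K.down_closed hxF
              (Finset.singleton_subset_iff.mpr hu₀x) ⟨u₀, Finset.mem_singleton_self _⟩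
            have hu₀X : {u₀} ∈ X := hsing u₀ hu₀F
            have hcx : cmpr x {u₀} :=
              ⟨fun hc => hx1 ⟨u₀, hc⟩, Or.inr (Finset.singleton_subset_iff.mpr hu₀x)⟩
            rcases hdom _ hu₀X hcx with h2 | h2
            · rcases h2.2 with h3 | h3
              · rcases Finset.subset_singleton_iff.mp h3 with h4 | h4
                · exact (Finset.nonempty_iff_ne_empty.mp (K.nonempty_of_mem (hsub hyX))) h4
                · exact h2.1 h4
              · exact hu₀y (h3 (Finset.mem_singleton_self _))
            · exact hu₀y (h2 ▸ Finset.mem_singleton_self u₀)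
      refine ih ((Finset.erase_subset x X).trans hsub) ?_ ?_
      · intro w hw
        exact Finset.mem_erase.mpr ⟨fun hc => hx1 ⟨w, hc.symm⟩, hsing w hw⟩
      · intro ρ hρ
        obtain ⟨μ, hμX, hρμ⟩ := hcov ρ hρ
        by_cases hμx : μ = x
        · rw [hμx] at hρμ
          exact ⟨y, Finset.mem_erase.mpr ⟨Ne.symm hcxy.1, hyX⟩, hρμ.trans hxy⟩
        · exact ⟨μ, Finset.mem_erase.mpr ⟨hμx, hμX⟩, hρμ⟩

lemma hardLemma : ∀ n (K : Cplx V), K.faces.card ≤ n → DismI K.faces → StrongCollapsible K := by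
  intro n
  induction n with
  | zero =>
    intro K hcard hD
    obtain ⟨σ, hσ⟩ := hD.nonempty
    rw [Finset.card_eq_zero.mp (Nat.le_zero.mp hcard)] at hσ
    exact absurd hσ (Finset.notMem_empty σ)
  | succ n ih =>
    intro K hcard hD
    rcases mainCrux K K.faces hD (Finset.Subset.refl _) (fun w hw => hw)
        (fun ρ hρ => ⟨ρ, hρ, Finset.Subset.refl ρ⟩) with ⟨v, v', hdom⟩ | huniq
    · have hred : Red K.faces (delete K v).faces := domDel hdom
      have hD' : DismI (delete K v).faces := DismI_of_Red hD hred
      have hvF : {v} ∈ K.faces := by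
        have h1 := hdom.1
        simp only [link, Finset.mem_filter] at h1
        exact K.down_closed h1.2.2
          (Finset.singleton_subset_iff.mpr (Finset.mem_insert_self v {v'}))
          ⟨v, Finset.mem_singleton_self v⟩
      have hsubD : (delete K v).faces ⊆ K.faces := by
        intro τ hτ
        simp only [delete, Finset.mem_filter] at hτ
        exact hτ.1
      have hlt : (delete K v).faces.card < K.faces.card := by
        apply Finset.card_lt_card
        refine ⟨hsubD, ?_⟩
        intro hcontra
        have h2 := hcontra hvF
        simp only [delete, Finset.mem_filter] at h2
        exact h2.2 (Finset.mem_singleton_self v)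
      obtain ⟨u, hu⟩ := ih (delete K v) (Nat.lt_succ_iff.mp (lt_of_lt_of_le hlt hcard)) hD'
      exact ⟨u, Relation.ReflTransGen.head ⟨v, ⟨v', hdom⟩, rfl⟩ hu⟩
    · obtain ⟨σ, hσ⟩ := hD.nonempty
      obtain ⟨v, hv⟩ := K.nonempty_of_mem hσ
      have hvF : {v} ∈ K.faces :=
        K.down_closed hσ (Finset.singleton_subset_iff.mpr hv) ⟨v, Finset.mem_singleton_self v⟩
      have hKpt : K = pt v := by
        apply Cplx.ext'
        apply Finset.Subset.antisymm
        · intro ρ hρ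
          have hsubv : ρ ⊆ {v} := by
            intro u hu
            have huF : {u} ∈ K.faces := K.down_closed hρ
              (Finset.singleton_subset_iff.mpr hu) ⟨u, Finset.mem_singleton_self u⟩
            rw [Finset.mem_singleton]
            exact huniq u v huF hvF
          rcases Finset.subset_singleton_iff.mp hsubv with h | h
          · exact absurd h (Finset.nonempty_iff_ne_empty.mp (K.nonempty_of_mem hρ))
          · show ρ ∈ ({{v}} : Finset (Finset V))
            exact Finset.mem_singleton.mpr h
        · intro ρ hρ
          have : ρ = {v} := Finset.mem_singleton.mp hρ
          rw [this]
          exact hvF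
      exact ⟨v, hKpt ▸ Relation.ReflTransGen.refl⟩

lemma stmt11aux (K : Cplx V) : StrongCollapsible K ↔ StrongCollapsible (sd K) := by
  constructor
  · rintro ⟨u, hu⟩
    have hred : Red K.faces ({({u} : Finset V)} : Finset (Finset V)) := SCK_to_Red hu
    refine ⟨({u} : Finset V), ?_⟩
    have h2 := Red_to_SC hred
    rw [orderCplx_singleton] at h2
    exact h2
  · rintro ⟨c, hc⟩
    have hc' : StrongCollapses (orderCplx K.faces) (pt c) := hc
    obtain ⟨Y, hY, hred⟩ := SC_to_Red hc'
    have hYc : Y = {c} := orderCplx_eq_pt hY.symm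
    subst hYc
    exact hardLemma K.faces.card K (le_refl _) (Red_to_DismI hred)

end
/-- `K` is strong collapsible iff its barycentric subdivision `K'`
is strong collapsible. -/
theorem stmt11 {V : Type} (K : Cplx V) :
    StrongCollapsible K ↔ StrongCollapsible (sd K) := by
  exact stmt11aux K

end StrongHomotopy
end

section
/- A finite poset X is a minimal finite space (it has no beat points) if and only if there are no two distinct points x, y ∈ X such that every point of X comparable with x is also comparable with y. -/
/- Theory of strong homotopy types of finite simplicial complexes
   (Barmak–Minian), basic definitions. -/

open Classical

namespace StrongHomotopy

variable {V W : Type}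

/-- a finite poset has no beat points iff there are no two distinct
points `x ≠ y` such that every point comparable with `x` is comparable with `y`. -/
theorem stmt12 {X : Type} [PartialOrder X] [Fintype X] :
    (∀ x : X, ¬ BeatPoint (Finset.univ : Finset X) x) ↔
      ¬ ∃ x y : X, x ≠ y ∧ ∀ z : X, (z ≤ x ∨ x ≤ z) → (z ≤ y ∨ y ≤ z) := by
  constructor
  · intro hmin
    rintro ⟨x, y, hxy, hcomp⟩
    rcases hcomp x (Or.inl le_rfl) with h | h
    · -- x < y : take w maximal in {z | x ≤ z ∧ z < y}; w is an up-beat point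
      have hlt : x < y := lt_of_le_of_ne h hxy
      set U : Finset X := Finset.univ.filter (fun z => x ≤ z ∧ z < y) with hU
      have hne : U.Nonempty := ⟨x, by simp [hU, hlt]⟩
      obtain ⟨w, hwU, hwmax⟩ : ∃ m ∈ U, ∀ z ∈ U, ¬ m < z := by
        obtain ⟨m, hm⟩ := Finset.exists_maximal hne
        exact ⟨m, hm.1, fun z hz hlt => lt_irrefl m (hlt.trans_le (hm.2 hz hlt.le))⟩
      simp only [hU, Finset.mem_filter, Finset.mem_univ, true_and] at hwU
      refine hmin w ⟨Finset.mem_univ w, Or.inr ⟨y, Finset.mem_univ y, hwU.2, ?_⟩⟩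
      intro z _ hz
      have hzx : x < z := lt_of_le_of_lt hwU.1 hz
      rcases hcomp z (Or.inr hzx.le) with hzy | hyz
      · rcases eq_or_lt_of_le hzy with rfl | hzy'
        · exact le_rfl
        · exact absurd hz (hwmax z (by simp [hU, hzx.le, hzy']))
      · exact hyz
    · -- y < x : take w minimal in {z | y < z ∧ z ≤ x}; w is a down-beat point
      have hlt : y < x := lt_of_le_of_ne h (Ne.symm hxy)
      set U : Finset X := Finset.univ.filter (fun z => y < z ∧ z ≤ x) with hU
      have hne : U.Nonempty := ⟨x, by simp [hU, hlt]⟩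
      obtain ⟨w, hwU, hwmin⟩ : ∃ m ∈ U, ∀ z ∈ U, ¬ z < m := by
        obtain ⟨m, hm⟩ := Finset.exists_minimal hne
        exact ⟨m, hm.1, fun z hz hlt => lt_irrefl z (hlt.trans_le (hm.2 hz hlt.le))⟩
      simp only [hU, Finset.mem_filter, Finset.mem_univ, true_and] at hwU
      refine hmin w ⟨Finset.mem_univ w, Or.inl ⟨y, Finset.mem_univ y, hwU.1, ?_⟩⟩
      intro z _ hz
      have hzx : z < x := lt_of_lt_of_le hz hwU.2
      rcases hcomp z (Or.inl hzx.le) with hzy | hyz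
      · exact hzy
      · rcases eq_or_lt_of_le hyz with rfl | hyz'
        · exact le_rfl
        · exact absurd hz (hwmin z (by simp [hU, hzx.le, hyz']))
  · intro h x hx
    obtain ⟨-, hbeat | hbeat⟩ := hx
    · obtain ⟨y, -, hyx, hmax⟩ := hbeat
      refine h ⟨x, y, (ne_of_gt hyx), ?_⟩
      intro z hz
      rcases hz with hz | hz
      · rcases eq_or_lt_of_le hz with rfl | hz'
        · exact Or.inr hyx.le
        · exact Or.inl (hmax z (Finset.mem_univ z) hz')
      · exact Or.inr (hyx.le.trans hz)
    · obtain ⟨y, -, hxy, hmin⟩ := hbeat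
      refine h ⟨x, y, (ne_of_lt hxy), ?_⟩
      intro z hz
      rcases hz with hz | hz
      · exact Or.inl (hz.trans hxy.le)
      · rcases eq_or_lt_of_le hz with rfl | hz'
        · exact Or.inl hxy.le
        · exact Or.inr (hmin z (Finset.mem_univ z) hz')


end StrongHomotopy
end

section
/- A finite poset X is a minimal finite space (it has no beat points) if and only if its order complex K(X) is a minimal complex (it has no dominated vertices). -/
/- Theory of strong homotopy types of finite simplicial complexes
   (Barmak–Minian), basic definitions. -/

open Classical

namespace StrongHomotopy

variable {V W : Type}

section Stmt13Aux

variable {X : Type} [PartialOrder X] [Fintype X]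

private lemma face_iff {σ : Finset X} :
    σ ∈ (orderCplx (Finset.univ : Finset X)).faces ↔
      σ.Nonempty ∧ IsChain (· ≤ ·) (σ : Set X) := by
  simp [orderCplx]

private lemma link_iff {v : X} {σ : Finset X} :
    σ ∈ link (orderCplx (Finset.univ : Finset X)) v ↔
      σ ∈ (orderCplx (Finset.univ : Finset X)).faces ∧ v ∉ σ ∧
        insert v σ ∈ (orderCplx (Finset.univ : Finset X)).faces := by
  simp [link, Finset.mem_filter, and_assoc]

omit [Fintype X] in
private lemma chain_pair {x y : X} (h : x ≤ y ∨ y ≤ x) :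
    IsChain (· ≤ ·) ({x, y} : Set X) := by
  intro p hp q hq hne
  simp only [Set.mem_insert_iff, Set.mem_singleton_iff] at hp hq
  rcases hp with rfl | rfl <;> rcases hq with rfl | rfl <;>
    first
      | exact absurd rfl hne
      | exact h
      | exact h.symm

private lemma cone_of_comparable {x y : X} (hxy : y ≠ x) (hcomp : y ≤ x ∨ x ≤ y)
    (hall : ∀ b : X, b ≠ x → (b ≤ x ∨ x ≤ b) → (b ≤ y ∨ y ≤ b)) :
    IsConeWithApex (link (orderCplx (Finset.univ : Finset X)) x) y := by
  constructor
  · rw [link_iff]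
    refine ⟨?_, ?_, ?_⟩
    · rw [face_iff]
      exact ⟨⟨y, Finset.mem_singleton_self y⟩, by
        simp only [Finset.coe_singleton]
        exact Set.subsingleton_singleton.isChain⟩
    · simp [Ne.symm hxy]
    · rw [face_iff]
      refine ⟨⟨x, Finset.mem_insert_self _ _⟩, ?_⟩
      have : ((insert x {y} : Finset X) : Set X) = {x, y} := by simp
      rw [this]
      exact chain_pair hcomp.symm
  · intro σ hσ
    rw [link_iff] at hσ ⊢
    obtain ⟨hf, hxσ, hins⟩ := hσ
    rw [face_iff] at hf hins
    have hch : IsChain (· ≤ ·) (insert y ((insert x σ : Finset X) : Set X)) := by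
      apply hins.2.insert
      intro b hb hne
      simp only [Finset.coe_insert, Set.mem_insert_iff, Finset.mem_coe] at hb
      rcases hb with rfl | hb
      · exact hcomp
      · have hbx : b ≠ x := fun e => hxσ (e ▸ hb)
        have hbc : x ≤ b ∨ b ≤ x := by
          refine hins.2 ?_ ?_ (Ne.symm hbx)
          · simp
          · simp [hb]
        exact (hall b hbx hbc.symm).symm
    have hch' : IsChain (· ≤ ·) ((insert x (insert y σ) : Finset X) : Set X) := by
      have : ((insert x (insert y σ) : Finset X) : Set X)
          = insert y ((insert x σ : Finset X) : Set X) := by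
        simp only [Finset.coe_insert]
        exact Set.insert_comm _ _ _
      rw [this]; exact hch
    refine ⟨?_, ?_, ?_⟩
    · rw [face_iff]
      refine ⟨⟨y, Finset.mem_insert_self _ _⟩, ?_⟩
      apply hch'.mono ?_
      intro p hp
      simp only [Finset.coe_insert, Set.mem_insert_iff] at hp ⊢
      tauto
    · simp only [Finset.mem_insert, not_or]
      exact ⟨Ne.symm hxy, hxσ⟩
    · rw [face_iff]
      exact ⟨⟨x, Finset.mem_insert_self _ _⟩, hch'⟩

private lemma beat_dominated {x : X} (h : BeatPoint (Finset.univ : Finset X) x) :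
    Dominated (orderCplx (Finset.univ : Finset X)) x := by
  obtain ⟨-, ⟨y, -, hyx, hmax⟩ | ⟨y, -, hxy, hmin⟩⟩ := h
  · refine ⟨y, cone_of_comparable (ne_of_lt hyx) (Or.inl hyx.le) ?_⟩
    intro b hbx hbc
    rcases hbc with hb | hb
    · exact Or.inl (hmax b (Finset.mem_univ b) (lt_of_le_of_ne hb hbx))
    · exact Or.inr (hyx.le.trans hb)
  · refine ⟨y, cone_of_comparable (ne_of_gt hxy) (Or.inr hxy.le) ?_⟩
    intro b hbx hbc
    rcases hbc with hb | hb
    · exact Or.inl (hb.trans hxy.le)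
    · exact Or.inr (hmin b (Finset.mem_univ b) (lt_of_le_of_ne hb (Ne.symm hbx)))

private lemma aux_up {v a : X} (hva : v < a)
    (key : ∀ z : X, z ≠ v → z ≤ v ∨ v ≤ z → z ≤ a ∨ a ≤ z) :
    ∃ x : X, BeatPoint (Finset.univ : Finset X) x := by
  classical
  rcases (Finset.univ.filter (fun z : X => v < z ∧ z < a)).eq_empty_or_nonempty
    with hE | hNE
  · refine ⟨v, Finset.mem_univ v, Or.inr ⟨a, Finset.mem_univ a, hva, ?_⟩⟩
    intro z _ hvz
    rcases key z (ne_of_gt hvz) (Or.inr hvz.le) with hza | haz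
    · rcases eq_or_lt_of_le hza with he | hlt
      · exact le_of_eq he.symm
      · have hmem : z ∈ Finset.univ.filter (fun z : X => v < z ∧ z < a) :=
          Finset.mem_filter.mpr ⟨Finset.mem_univ z, hvz, hlt⟩
        rw [hE] at hmem
        exact absurd hmem (Finset.notMem_empty z)
    · exact haz
  · obtain ⟨z₀, hz₀S, hmaxi⟩ : ∃ m ∈ Finset.univ.filter (fun z : X => v < z ∧ z < a),
        ∀ x ∈ Finset.univ.filter (fun z : X => v < z ∧ z < a), ¬ m < x := by
      obtain ⟨m, hm⟩ := Finset.exists_maximal hNE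
      exact ⟨m, hm.1, fun x hx hlt => lt_irrefl _ (lt_of_lt_of_le hlt (hm.2 hx hlt.le))⟩
    obtain ⟨-, hvz₀, hz₀a⟩ := Finset.mem_filter.mp hz₀S
    refine ⟨z₀, Finset.mem_univ z₀, Or.inr ⟨a, Finset.mem_univ a, hz₀a, ?_⟩⟩
    intro w _ hz₀w
    have hvw : v < w := hvz₀.trans hz₀w
    rcases key w (ne_of_gt hvw) (Or.inr hvw.le) with hwa | haw
    · rcases eq_or_lt_of_le hwa with he | hlt
      · exact le_of_eq he.symm
      · exact absurd hz₀w
          (hmaxi w (Finset.mem_filter.mpr ⟨Finset.mem_univ w, hvw, hlt⟩))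
    · exact haw

private lemma aux_down {v a : X} (hav : a < v)
    (key : ∀ z : X, z ≠ v → z ≤ v ∨ v ≤ z → z ≤ a ∨ a ≤ z) :
    ∃ x : X, BeatPoint (Finset.univ : Finset X) x := by
  classical
  rcases (Finset.univ.filter (fun z : X => a < z ∧ z < v)).eq_empty_or_nonempty
    with hE | hNE
  · refine ⟨v, Finset.mem_univ v, Or.inl ⟨a, Finset.mem_univ a, hav, ?_⟩⟩
    intro z _ hzv
    rcases key z (ne_of_lt hzv) (Or.inl hzv.le) with hza | haz
    · exact hza
    · rcases eq_or_lt_of_le haz with he | hlt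
      · exact le_of_eq he.symm
      · have hmem : z ∈ Finset.univ.filter (fun z : X => a < z ∧ z < v) :=
          Finset.mem_filter.mpr ⟨Finset.mem_univ z, hlt, hzv⟩
        rw [hE] at hmem
        exact absurd hmem (Finset.notMem_empty z)
  · obtain ⟨z₀, hz₀S, hmini⟩ : ∃ m ∈ Finset.univ.filter (fun z : X => a < z ∧ z < v),
        ∀ x ∈ Finset.univ.filter (fun z : X => a < z ∧ z < v), ¬ x < m := by
      obtain ⟨m, hm⟩ := Finset.exists_minimal hNE
      exact ⟨m, hm.1, fun x hx hlt => lt_irrefl _ (lt_of_lt_of_le hlt (hm.2 hx hlt.le))⟩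
    obtain ⟨-, haz₀, hz₀v⟩ := Finset.mem_filter.mp hz₀S
    refine ⟨z₀, Finset.mem_univ z₀, Or.inl ⟨a, Finset.mem_univ a, haz₀, ?_⟩⟩
    intro w _ hwz₀
    have hwv : w < v := hwz₀.trans hz₀v
    rcases key w (ne_of_lt hwv) (Or.inl hwv.le) with hwa | haw
    · exact hwa
    · rcases eq_or_lt_of_le haw with he | hlt
      · exact le_of_eq he.symm
      · exact absurd hwz₀
          (hmini w (Finset.mem_filter.mpr ⟨Finset.mem_univ w, hlt, hwv⟩))

private lemma dominated_beat {v : X}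
    (h : Dominated (orderCplx (Finset.univ : Finset X)) v) :
    ∃ x : X, BeatPoint (Finset.univ : Finset X) x := by
  obtain ⟨a, ha1, ha2⟩ := h
  rw [link_iff] at ha1
  obtain ⟨hfa, hva, hins⟩ := ha1
  have hav : a ≠ v := fun e => hva (by simp [e])
  have hcomp : a ≤ v ∨ v ≤ a := by
    have hc := (face_iff.mp hins).2
    have := hc (show v ∈ ((insert v {a} : Finset X) : Set X) by simp)
      (show a ∈ ((insert v {a} : Finset X) : Set X) by simp) (Ne.symm hav)
    exact this.symm
  have key : ∀ z : X, z ≠ v → z ≤ v ∨ v ≤ z → z ≤ a ∨ a ≤ z := by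
    intro z hzv hzc
    by_cases hza : z = a
    · exact Or.inl (le_of_eq hza)
    · have hz : {z} ∈ link (orderCplx (Finset.univ : Finset X)) v := by
        rw [link_iff, face_iff, face_iff]
        refine ⟨⟨⟨z, Finset.mem_singleton_self z⟩, by
          simp only [Finset.coe_singleton]
          exact Set.subsingleton_singleton.isChain⟩, by simp [Ne.symm hzv], ?_⟩
        refine ⟨⟨v, Finset.mem_insert_self _ _⟩, ?_⟩
        have : ((insert v {z} : Finset X) : Set X) = {v, z} := by simp
        rw [this]
        exact chain_pair hzc.symm
      have h2 := ha2 {z} hz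
      rw [link_iff] at h2
      have hc := (face_iff.mp h2.1).2
      exact (hc (show z ∈ ((insert a {z} : Finset X) : Set X) by simp)
        (show a ∈ ((insert a {z} : Finset X) : Set X) by simp) hza)
  rcases hcomp with h1 | h2
  · exact aux_down (lt_of_le_of_ne h1 hav) key
  · exact aux_up (lt_of_le_of_ne h2 (Ne.symm hav)) key

end Stmt13Aux

/-- a finite poset is a minimal finite space iff its order complex
is a minimal complex. -/
theorem stmt13 {X : Type} [PartialOrder X] [Fintype X] :
    (∀ x : X, ¬ BeatPoint (Finset.univ : Finset X) x) ↔
      MinimalCplx (orderCplx (Finset.univ : Finset X)) := by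
  constructor
  · intro h v hv
    obtain ⟨x, hx⟩ := dominated_beat hv
    exact h x hx
  · intro h x hx
    exact h x (beat_dominated hx)

end StrongHomotopy
end

section
/- A finite poset X is contractible (it strong collapses to a one-point poset) if and only if its barycentric subdivision X' = X(K(X)) is contractible. -/
/- Theory of strong homotopy types of finite simplicial complexes
   (Barmak–Minian), basic definitions. -/

open Classical

namespace StrongHomotopy

variable {V W : Type}

/-! ### Auxiliary machinery for Statement 14 -/

attribute [local instance 2000] Classical.propDecidable

section Machinery

variable {α : Type} [PartialOrder α]

lemma elem_collapse_subset {Y Z : Finset α} (h : ElemPosetStrongCollapse Y Z) : Z ⊆ Y := by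
  obtain ⟨x, _, rfl⟩ := h; exact Finset.erase_subset x Y

lemma collapses_subset {Y Z : Finset α} (h : PosetStrongCollapses Y Z) : Z ⊆ Y := by
  induction h with
  | refl => exact subset_rfl
  | tail _ hstep ih => exact (elem_collapse_subset hstep).trans ih

lemma elem_collapse_nonempty {Y Z : Finset α} (h : ElemPosetStrongCollapse Y Z) : Z.Nonempty := by
  obtain ⟨x, ⟨hxY, hd⟩, rfl⟩ := h
  rcases hd with ⟨y, hy, hlt, -⟩ | ⟨y, hy, hlt, -⟩
  · exact ⟨y, Finset.mem_erase.mpr ⟨ne_of_lt hlt, hy⟩⟩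
  · exact ⟨y, Finset.mem_erase.mpr ⟨ne_of_gt hlt, hy⟩⟩

lemma collapses_nonempty {Y Z : Finset α} (h : PosetStrongCollapses Y Z) (hY : Y.Nonempty) :
    Z.Nonempty := by
  induction h with
  | refl => exact hY
  | tail _ hstep _ => exact elem_collapse_nonempty hstep

lemma source_nonempty {Y : Finset α} {c : α} (h : PosetStrongCollapses Y {c}) : Y.Nonempty := by
  induction h using Relation.ReflTransGen.head_induction_on with
  | refl => exact ⟨c, Finset.mem_singleton_self c⟩
  | head hstep _ _ => obtain ⟨x, hb, _⟩ := hstep; exact ⟨x, hb.1⟩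

lemma finset_exists_minimal_old (s : Finset α) (h : s.Nonempty) :
    ∃ m ∈ s, ∀ x ∈ s, ¬x < m := by
  obtain ⟨a, ha⟩ := Finset.exists_minimal h
  exact ⟨a, ha.1, fun x hx hlt => lt_irrefl _ (lt_of_lt_of_le hlt (ha.2 hx hlt.le))⟩

lemma finset_exists_maximal_old (s : Finset α) (h : s.Nonempty) :
    ∃ m ∈ s, ∀ x ∈ s, ¬m < x := by
  obtain ⟨a, ha⟩ := Finset.exists_maximal h
  exact ⟨a, ha.1, fun x hx hlt => lt_irrefl _ (lt_of_lt_of_le hlt (ha.2 hx hlt.le))⟩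

/-- `f` is a good self-map relative to `Y`: maps `Y` into `Y`, monotone on `Y`. -/
def GoodOn (Y : Finset α) (f : α → α) : Prop :=
  (∀ a ∈ Y, f a ∈ Y) ∧ ∀ a ∈ Y, ∀ b ∈ Y, a ≤ b → f a ≤ f b

def HRel (Y : Finset α) (f g : α → α) : Prop :=
  GoodOn Y f ∧ GoodOn Y g ∧ ((∀ a ∈ Y, f a ≤ g a) ∨ (∀ a ∈ Y, g a ≤ f a))

def Htpy (Y : Finset α) : (α → α) → (α → α) → Prop := Relation.ReflTransGen (HRel Y)

lemma goodOn_id (Y : Finset α) : GoodOn Y id := ⟨fun a ha => ha, fun _ _ _ _ h => h⟩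

lemma Htpy.compPush {Y Z : Finset α} {f g ρ : α → α}
    (hρm : ∀ a ∈ Y, ρ a ∈ Z) (hρo : ∀ a ∈ Y, ∀ b ∈ Y, a ≤ b → ρ a ≤ ρ b)
    (hZY : Z ⊆ Y) (h : Htpy Y f g) :
    Htpy Z (fun a => ρ (f a)) (fun a => ρ (g a)) := by
  induction h with
  | refl => exact Relation.ReflTransGen.refl
  | tail _ hrel ih =>
    refine ih.tail ?_
    obtain ⟨hp, hq, hcmp⟩ := hrel
    have good : ∀ {u : α → α}, GoodOn Y u → GoodOn Z (fun a => ρ (u a)) := by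
      intro u hu
      constructor
      · intro a ha; exact hρm _ (hu.1 a (hZY ha))
      · intro a ha b hb hab
        exact hρo _ (hu.1 a (hZY ha)) _ (hu.1 b (hZY hb)) (hu.2 a (hZY ha) b (hZY hb) hab)
    refine ⟨good hp, good hq, ?_⟩
    rcases hcmp with hc | hc
    · left; intro a ha
      exact hρo _ (hp.1 a (hZY ha)) _ (hq.1 a (hZY ha)) (hc a (hZY ha))
    · right; intro a ha
      exact hρo _ (hq.1 a (hZY ha)) _ (hp.1 a (hZY ha)) (hc a (hZY ha))

lemma Htpy.precomp {Y W : Finset α} {p q s : α → α}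
    (hs : ∀ a ∈ Y, s a ∈ W) (hso : ∀ a ∈ Y, ∀ b ∈ Y, a ≤ b → s a ≤ s b)
    (hWY : W ⊆ Y) (h : Htpy W p q) :
    Htpy Y (fun a => p (s a)) (fun a => q (s a)) := by
  induction h with
  | refl => exact Relation.ReflTransGen.refl
  | tail _ hrel ih =>
    refine ih.tail ?_
    obtain ⟨hp, hq, hcmp⟩ := hrel
    have good : ∀ {u : α → α}, GoodOn W u → GoodOn Y (fun a => u (s a)) := by
      intro u hu
      constructor
      · intro a ha; exact hWY (hu.1 _ (hs a ha))
      · intro a ha b hb hab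
        exact hu.2 _ (hs a ha) _ (hs b hb) (hso a ha b hb hab)
    refine ⟨good hp, good hq, ?_⟩
    rcases hcmp with hc | hc
    · left; intro a ha; exact hc _ (hs a ha)
    · right; intro a ha; exact hc _ (hs a ha)

lemma Htpy.congrOn {Y : Finset α} {f g f' g' : α → α} (h : Htpy Y f g)
    (hf' : GoodOn Y f') (hf : GoodOn Y f) (hg : GoodOn Y g) (hg' : GoodOn Y g')
    (e1 : ∀ a ∈ Y, f' a = f a) (e2 : ∀ a ∈ Y, g' a = g a) : Htpy Y f' g' := by
  have h1 : Htpy Y f' f :=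
    Relation.ReflTransGen.single ⟨hf', hf, Or.inl (fun a ha => le_of_eq (e1 a ha))⟩
  have h2 : Htpy Y g g' :=
    Relation.ReflTransGen.single ⟨hg, hg', Or.inl (fun a ha => le_of_eq (e2 a ha).symm)⟩
  exact (h1.trans h).trans h2

/-- Retraction from a strong collapse, homotopic to the identity. -/
lemma retr_of_collapses {Y Z : Finset α} (h : PosetStrongCollapses Y Z) :
    ∃ r : α → α, GoodOn Y r ∧ (∀ a ∈ Y, r a ∈ Z) ∧ (∀ a ∈ Z, r a = a) ∧ Htpy Y id r := by
  induction h using Relation.ReflTransGen.head_induction_on with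
  | refl => exact ⟨id, goodOn_id _, fun a ha => ha, fun a _ => rfl, Relation.ReflTransGen.refl⟩
  | @head Y Y₁ hstep hrtg ih =>
    obtain ⟨r₁, hr₁good, hr₁m, hr₁fix, hr₁h⟩ := ih
    obtain ⟨x, ⟨hxY, hw⟩, rfl⟩ := hstep
    have hZY₁ : Z ⊆ Y.erase x := collapses_subset hrtg
    -- the elementary retraction
    rcases hw with ⟨y, hyY, hylt, hymax⟩ | ⟨y, hyY, hylt, hymin⟩
    · -- y = max of points below x
      set r₀ : α → α := fun a => if a = x then y else a with hr₀def
      have hr₀m : ∀ a ∈ Y, r₀ a ∈ Y.erase x := by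
        intro a ha
        by_cases hax : a = x
        · simp only [hr₀def, if_pos hax]
          exact Finset.mem_erase.mpr ⟨ne_of_lt hylt, hyY⟩
        · simp only [hr₀def, if_neg hax]
          exact Finset.mem_erase.mpr ⟨hax, ha⟩
      have hr₀fix : ∀ a ∈ Y.erase x, r₀ a = a := by
        intro a ha
        simp only [hr₀def, if_neg (Finset.mem_erase.mp ha).1]
      have hr₀good : GoodOn Y r₀ := by
        refine ⟨fun a ha => Finset.mem_of_mem_erase (hr₀m a ha), ?_⟩
        intro a ha b hb hab
        by_cases hax : a = x <;> by_cases hbx : b = x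
        · simp only [hr₀def, if_pos hax, if_pos hbx]; exact le_refl _
        · simp only [hr₀def, if_pos hax, if_neg hbx]
          have hxb : x ≤ b := by rw [← hax]; exact hab
          have : x < b := lt_of_le_of_ne hxb (fun hh => hbx hh.symm)
          exact le_of_lt (lt_trans hylt this)
        · simp only [hr₀def, if_neg hax, if_pos hbx]
          have hax2 : a ≤ x := by rw [← hbx]; exact hab
          exact hymax a ha (lt_of_le_of_ne hax2 hax)
        · simp only [hr₀def, if_neg hax, if_neg hbx]; exact hab
      have hstep1 : Htpy Y id r₀ := by
        refine Relation.ReflTransGen.single ⟨goodOn_id Y, hr₀good, Or.inr ?_⟩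
        intro a ha
        by_cases hax : a = x
        · simp only [hr₀def, if_pos hax, id]; rw [hax]; exact le_of_lt hylt
        · simp only [hr₀def, if_neg hax, id]; exact le_refl _
      refine ⟨fun a => r₁ (r₀ a), ?_, ?_, ?_, ?_⟩
      · constructor
        · intro a ha
          exact Finset.mem_of_mem_erase (hr₁good.1 _ (hr₀m a ha))
        · intro a ha b hb hab
          exact hr₁good.2 _ (hr₀m a ha) _ (hr₀m b hb) (hr₀good.2 a ha b hb hab)
      · intro a ha; exact hr₁m _ (hr₀m a ha)
      · intro a ha
        have ha1 : a ∈ Y.erase x := hZY₁ ha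
        show r₁ (r₀ a) = a
        rw [hr₀fix a ha1]; exact hr₁fix a ha
      · refine hstep1.trans ?_
        have := Htpy.precomp (W := Y.erase x) (p := id) (q := r₁) (s := r₀)
          hr₀m hr₀good.2 (Finset.erase_subset x Y) hr₁h
        exact this
    · -- y = min of points above x (dual)
      set r₀ : α → α := fun a => if a = x then y else a with hr₀def
      have hr₀m : ∀ a ∈ Y, r₀ a ∈ Y.erase x := by
        intro a ha
        by_cases hax : a = x
        · simp only [hr₀def, if_pos hax]
          exact Finset.mem_erase.mpr ⟨ne_of_gt hylt, hyY⟩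
        · simp only [hr₀def, if_neg hax]
          exact Finset.mem_erase.mpr ⟨hax, ha⟩
      have hr₀fix : ∀ a ∈ Y.erase x, r₀ a = a := by
        intro a ha
        simp only [hr₀def, if_neg (Finset.mem_erase.mp ha).1]
      have hr₀good : GoodOn Y r₀ := by
        refine ⟨fun a ha => Finset.mem_of_mem_erase (hr₀m a ha), ?_⟩
        intro a ha b hb hab
        by_cases hax : a = x <;> by_cases hbx : b = x
        · simp only [hr₀def, if_pos hax, if_pos hbx]; exact le_refl _
        · simp only [hr₀def, if_pos hax, if_neg hbx]
          have hxb : x ≤ b := by rw [← hax]; exact hab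
          exact hymin b hb (lt_of_le_of_ne hxb (fun hh => hbx hh.symm))
        · simp only [hr₀def, if_neg hax, if_pos hbx]
          have hax2 : a ≤ x := by rw [← hbx]; exact hab
          have : a < x := lt_of_le_of_ne hax2 hax
          exact le_of_lt (lt_trans this hylt)
        · simp only [hr₀def, if_neg hax, if_neg hbx]; exact hab
      have hstep1 : Htpy Y id r₀ := by
        refine Relation.ReflTransGen.single ⟨goodOn_id Y, hr₀good, Or.inl ?_⟩
        intro a ha
        by_cases hax : a = x
        · simp only [hr₀def, if_pos hax, id]; rw [hax]; exact le_of_lt hylt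
        · simp only [hr₀def, if_neg hax, id]; exact le_refl _
      refine ⟨fun a => r₁ (r₀ a), ?_, ?_, ?_, ?_⟩
      · constructor
        · intro a ha
          exact Finset.mem_of_mem_erase (hr₁good.1 _ (hr₀m a ha))
        · intro a ha b hb hab
          exact hr₁good.2 _ (hr₀m a ha) _ (hr₀m b hb) (hr₀good.2 a ha b hb hab)
      · intro a ha; exact hr₁m _ (hr₀m a ha)
      · intro a ha
        have ha1 : a ∈ Y.erase x := hZY₁ ha
        show r₁ (r₀ a) = a
        rw [hr₀fix a ha1]; exact hr₁fix a ha
      · refine hstep1.trans ?_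
        have := Htpy.precomp (W := Y.erase x) (p := id) (q := r₁) (s := r₀)
          hr₀m hr₀good.2 (Finset.erase_subset x Y) hr₁h
        exact this

def MinimalPoset (Y : Finset α) : Prop := ∀ x, ¬ BeatPoint Y x

lemma le_id_eq {Y : Finset α} {f : α → α} (hmin : MinimalPoset Y) (hf : GoodOn Y f)
    (hle : ∀ a ∈ Y, f a ≤ a) : ∀ a ∈ Y, f a = a := by
  by_contra hcon
  push_neg at hcon
  obtain ⟨a₀, ha₀Y, ha₀⟩ := hcon
  have hBne : (Y.filter (fun a => f a ≠ a)).Nonempty := ⟨a₀, Finset.mem_filter.mpr ⟨ha₀Y, ha₀⟩⟩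
  obtain ⟨a, haB, hamin⟩ := finset_exists_minimal_old _ hBne
  obtain ⟨haY, hane⟩ := Finset.mem_filter.mp haB
  have hfa : f a < a := lt_of_le_of_ne (hle a haY) hane
  refine hmin a ⟨haY, Or.inl ⟨f a, hf.1 a haY, hfa, ?_⟩⟩
  intro z hz hza
  have hzfix : f z = z := by
    by_contra hzne
    exact hamin z (Finset.mem_filter.mpr ⟨hz, hzne⟩) hza
  calc z = f z := hzfix.symm
    _ ≤ f a := hf.2 z hz a haY (le_of_lt hza)

lemma ge_id_eq {Y : Finset α} {f : α → α} (hmin : MinimalPoset Y) (hf : GoodOn Y f)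
    (hle : ∀ a ∈ Y, a ≤ f a) : ∀ a ∈ Y, f a = a := by
  by_contra hcon
  push_neg at hcon
  obtain ⟨a₀, ha₀Y, ha₀⟩ := hcon
  have hBne : (Y.filter (fun a => f a ≠ a)).Nonempty := ⟨a₀, Finset.mem_filter.mpr ⟨ha₀Y, ha₀⟩⟩
  obtain ⟨a, haB, hamax⟩ := finset_exists_maximal_old _ hBne
  obtain ⟨haY, hane⟩ := Finset.mem_filter.mp haB
  have hfa : a < f a := lt_of_le_of_ne (hle a haY) (fun h => hane h.symm)
  refine hmin a ⟨haY, Or.inr ⟨f a, hf.1 a haY, hfa, ?_⟩⟩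
  intro z hz hza
  have hzfix : f z = z := by
    by_contra hzne
    exact hamax z (Finset.mem_filter.mpr ⟨hz, hzne⟩) hza
  calc f a ≤ f z := hf.2 a haY z hz (le_of_lt hza)
    _ = z := hzfix

lemma htpy_id_eq {Y : Finset α} {f g : α → α} (hmin : MinimalPoset Y) (h : Htpy Y f g)
    (hf : ∀ a ∈ Y, f a = a) : ∀ a ∈ Y, g a = a := by
  induction h with
  | refl => exact hf
  | tail _ hrel ih =>
    obtain ⟨hp, hq, hcmp⟩ := hrel
    rcases hcmp with hc | hc
    · refine ge_id_eq hmin hq ?_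
      intro a ha
      calc a = _ := (ih a ha).symm
        _ ≤ _ := hc a ha
    · refine le_id_eq hmin hq ?_
      intro a ha
      calc _ ≤ _ := hc a ha
        _ = a := ih a ha

lemma exists_core (Y : Finset α) : ∃ Z, PosetStrongCollapses Y Z ∧ MinimalPoset Z := by
  suffices h : ∀ n (Y : Finset α), Y.card = n → ∃ Z, PosetStrongCollapses Y Z ∧ MinimalPoset Z
    from h _ Y rfl
  intro n
  induction n using Nat.strong_induction_on with
  | _ n ih =>
    intro Y hn
    by_cases hb : ∃ x, BeatPoint Y x
    · obtain ⟨x, hx⟩ := hb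
      have hxY : x ∈ Y := hx.1
      have hcard : (Y.erase x).card < n := by
        rw [← hn]; exact Finset.card_erase_lt_of_mem hxY
      obtain ⟨Z, hZcol, hZmin⟩ := ih _ hcard (Y.erase x) rfl
      exact ⟨Z, Relation.ReflTransGen.head ⟨x, hx, rfl⟩ hZcol, hZmin⟩
    · push_neg at hb
      exact ⟨Y, Relation.ReflTransGen.refl, hb⟩

lemma contractible_erase {Y : Finset α} {x : α} (hc : PosetContractible Y)
    (hb : BeatPoint Y x) : PosetContractible (Y.erase x) := by
  obtain ⟨v, hv⟩ := hc
  have hvY : v ∈ Y := collapses_subset hv (Finset.mem_singleton_self v)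
  -- retraction of the one-step collapse Y → Y.erase x
  have hone : PosetStrongCollapses Y (Y.erase x) :=
    Relation.ReflTransGen.single ⟨x, hb, rfl⟩
  obtain ⟨r₁, hr₁good, hr₁m, hr₁fix, _⟩ := retr_of_collapses hone
  obtain ⟨Z, hZcol, hZmin⟩ := exists_core (Y.erase x)
  obtain ⟨ρ₂, hρ₂good, hρ₂m, hρ₂fix, _⟩ := retr_of_collapses hZcol
  obtain ⟨R, hRgood, hRm, _, hRh⟩ := retr_of_collapses hv
  have hRv : ∀ a ∈ Y, R a = v := by
    intro a ha; exact Finset.mem_singleton.mp (hRm a ha)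
  set ρ : α → α := fun a => ρ₂ (r₁ a) with hρdef
  have hρm : ∀ a ∈ Y, ρ a ∈ Z := fun a ha => hρ₂m _ (hr₁m a ha)
  have hρo : ∀ a ∈ Y, ∀ b ∈ Y, a ≤ b → ρ a ≤ ρ b := by
    intro a ha b hb hab
    exact hρ₂good.2 _ (hr₁m a ha) _ (hr₁m b hb) (hr₁good.2 a ha b hb hab)
  have hZY' : Z ⊆ Y.erase x := collapses_subset hZcol
  have hZY : Z ⊆ Y := hZY'.trans (Finset.erase_subset x Y)
  have hρfix : ∀ a ∈ Z, ρ a = a := by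
    intro a ha
    simp only [hρdef]
    rw [hr₁fix a (hZY' ha), hρ₂fix a ha]
  -- push the homotopy id ≃ R down to Z
  have hpush : Htpy Z (fun a => ρ (id a)) (fun a => ρ (R a)) :=
    Htpy.compPush hρm hρo hZY hRh
  have hZne : Z.Nonempty := by
    refine collapses_nonempty hZcol (elem_collapse_nonempty ⟨x, hb, rfl⟩)
  obtain ⟨a₀, ha₀⟩ := hZne
  have hgoodconst : GoodOn Z (fun _ => ρ v) := by
    refine ⟨fun a _ => hρm v hvY, fun _ _ _ _ _ => le_refl _⟩
  have hgood1 : GoodOn Z (fun a => ρ (id a)) := by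
    refine ⟨fun a ha => hρm _ (hZY ha), fun a ha b hb hab => hρo _ (hZY ha) _ (hZY hb) hab⟩
  have hgood2 : GoodOn Z (fun a => ρ (R a)) := by
    refine ⟨fun a ha => hρm _ (hRgood.1 _ (hZY ha)), ?_⟩
    intro a ha b hb hab
    exact hρo _ (hRgood.1 _ (hZY ha)) _ (hRgood.1 _ (hZY hb))
      (hRgood.2 _ (hZY ha) _ (hZY hb) hab)
  have hhtpy : Htpy Z id (fun _ => ρ v) := by
    refine Htpy.congrOn hpush (goodOn_id Z) hgood1 hgood2 hgoodconst ?_ ?_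
    · intro a ha; simp only [id]; exact (hρfix a ha).symm
    · intro a ha; show ρ v = ρ (R a); rw [hRv a (hZY ha)]
  have hconst : ∀ a ∈ Z, a = ρ v := by
    intro a ha
    exact (htpy_id_eq hZmin hhtpy (fun a _ => rfl) a ha).symm
  have hZeq : Z = {a₀} := by
    ext b
    simp only [Finset.mem_singleton]
    constructor
    · intro hb'; rw [hconst b hb', hconst a₀ ha₀]
    · intro hb'; subst hb'; exact ha₀
  exact ⟨a₀, hZeq ▸ hZcol⟩

lemma contractible_of_collapses {Y Z : Finset α} (hc : PosetContractible Y)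
    (h : PosetStrongCollapses Y Z) : PosetContractible Z := by
  induction h using Relation.ReflTransGen.head_induction_on with
  | refl => exact hc
  | head hstep _ ih =>
    obtain ⟨x, hb, rfl⟩ := hstep
    exact ih (contractible_erase hc hb)

end Machinery


section Removal

variable {α : Type} [PartialOrder α]

/-- Remove a set `S` from `Y` one beat point at a time, guided by an invariant `Inv`.
Stated membership-theoretically to avoid decidability-instance issues. -/
lemma collapse_by_removal {α : Type} [PartialOrder α] {Y S D : Finset α} (hS : S ⊆ Y)
    (hD : ∀ u, u ∈ D ↔ u ∈ Y ∧ u ∉ S)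
    (Cur : Finset α → Finset α)
    (hCur : ∀ T u, u ∈ Cur T ↔ u ∈ Y ∧ ¬(u ∈ S ∧ u ∉ T))
    (Inv : Finset α → Prop) (hG : Inv S)
    (hstep : ∀ T ⊆ S, Inv T → T.Nonempty →
      ∃ t ∈ T, Inv (T.erase t) ∧ BeatPoint (Cur T) t) :
    PosetStrongCollapses Y D := by
  suffices h : ∀ n (T : Finset α), T.card = n → T ⊆ S → Inv T →
      PosetStrongCollapses (Cur T) D by
    have h2 := h S.card S rfl subset_rfl hG
    have hYS : Cur S = Y := by
      ext u
      rw [hCur]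
      constructor
      · exact fun h => h.1
      · intro hu; exact ⟨hu, fun hc => hc.2 hc.1⟩
    rwa [hYS] at h2
  intro n
  induction n with
  | zero =>
    intro T h0 hTS hGT
    have hT : T = ∅ := Finset.card_eq_zero.mp h0
    subst hT
    have : Cur ∅ = D := by
      ext u
      rw [hCur, hD]
      simp only [Finset.notMem_empty, not_false_iff, and_true]
      try tauto
    rw [this]
    exact Relation.ReflTransGen.refl
  | succ n ih =>
    intro T hc hTS hGT
    have hne : T.Nonempty := by
      rw [← Finset.card_pos, hc]; exact Nat.succ_pos n
    obtain ⟨t, htT, hG', hbeat⟩ := hstep T hTS hGT hne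
    have htS : t ∈ S := hTS htT
    have heq : (Cur T).erase t = Cur (T.erase t) := by
      ext u
      rw [Finset.mem_erase, hCur, hCur]
      constructor
      · rintro ⟨hut, huY, hu⟩
        refine ⟨huY, ?_⟩
        rintro ⟨huS, hunot⟩
        exact hu ⟨huS, fun huT => hunot (Finset.mem_erase.mpr ⟨hut, huT⟩)⟩
      · rintro ⟨huY, hu⟩
        have hut : u ≠ t := by
          rintro rfl
          exact hu ⟨htS, fun hmem => (Finset.mem_erase.mp hmem).1 rfl⟩
        refine ⟨hut, huY, ?_⟩
        rintro ⟨huS, hunT⟩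
        exact hu ⟨huS, fun hmem => hunT (Finset.mem_of_mem_erase hmem)⟩
    have hstep1 : ElemPosetStrongCollapse (Cur T) (Cur (T.erase t)) := by
      exact ⟨t, hbeat, heq.symm⟩
    have hcard : (T.erase t).card = n := by
      rw [Finset.card_erase_of_mem htT, hc]; rfl
    exact Relation.ReflTransGen.head hstep1
      (ih (T.erase t) hcard ((Finset.erase_subset t T).trans hTS) hG')

end Removal

section TwoPhase

variable {Q : Type}

/-- Two-phase strong collapse: removing all members containing `x` from a family
of finite sets closed under inserting `y` (for members containing `x`) and
removing `x` (for members containing `x` and `y`). -/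
lemma two_phase (F : Finset (Finset Q)) (x y : Q) (hxy : x ≠ y)
    (H1 : ∀ c ∈ F, x ∈ c → insert y c ∈ F)
    (H2 : ∀ c ∈ F, x ∈ c → y ∈ c → c.erase x ∈ F) :
    PosetStrongCollapses F (F.filter (fun c => x ∉ c)) := by
  set S := F.filter (fun c => x ∈ c) with hSdef
  have hmemS : ∀ {c}, c ∈ S ↔ c ∈ F ∧ x ∈ c := by
    intro c; simp [hSdef]
  set Inv : Finset (Finset Q) → Prop := fun T =>
    (∀ c ∈ T, y ∉ c → ∀ d ∈ S, y ∉ d → d.card < c.card → d ∈ T) ∧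
    (∀ c ∈ T, y ∈ c → ∀ d ∈ S, y ∈ d → c.card < d.card → d ∈ T) ∧
    ((∃ c ∈ T, y ∉ c) → ∀ d ∈ S, y ∈ d → d ∈ T) with hInvdef
  have hSF : S ⊆ F := by rw [hSdef]; exact Finset.filter_subset _ _
  have hD : ∀ u, u ∈ F.filter (fun c => x ∉ c) ↔ u ∈ F ∧ u ∉ S := by
    intro u
    simp only [Finset.mem_filter, hSdef]
    try tauto
  have hCur : ∀ (T : Finset (Finset Q)) u, u ∈ F \ (S \ T) ↔ u ∈ F ∧ ¬(u ∈ S ∧ u ∉ T) := by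
    intro T u
    simp only [Finset.mem_sdiff]
    try tauto
  refine collapse_by_removal hSF hD (fun T => F \ (S \ T)) hCur Inv ?_ ?_
  · exact ⟨fun c _ _ d hd _ _ => hd, fun c _ _ d hd _ _ => hd, fun _ d hd _ => hd⟩
  · intro T hTS hInvT hTne
    have hTcur : ∀ {c}, c ∈ T → c ∈ F \ (S \ T) := by
      intro c hc
      have hcS := hTS hc
      rw [Finset.mem_sdiff]
      exact ⟨(hmemS.mp hcS).1, fun hmem => (Finset.mem_sdiff.mp hmem).2 hc⟩
    have hcur : ∀ {c}, c ∈ F \ (S \ T) → x ∈ c → c ∈ T := by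
      intro c hc hxc
      obtain ⟨hcF, hcns⟩ := Finset.mem_sdiff.mp hc
      by_contra hcT
      exact hcns (Finset.mem_sdiff.mpr ⟨hmemS.mpr ⟨hcF, hxc⟩, hcT⟩)
    by_cases hyf : (T.filter (fun c => y ∉ c)).Nonempty
    · -- phase 1: remove a y-free member of maximal cardinality
      obtain ⟨c, hcmem, hcmax⟩ := Finset.exists_max_image _ (fun c => c.card) hyf
      obtain ⟨hcT, hcy⟩ := Finset.mem_filter.mp hcmem
      have hcS := hTS hcT
      obtain ⟨hcF, hcx⟩ := hmemS.mp hcS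
      set d := insert y c with hddef
      have hdF : d ∈ F := H1 c hcF hcx
      have hdS : d ∈ S := hmemS.mpr ⟨hdF, Finset.mem_insert_of_mem hcx⟩
      have hdT : d ∈ T := hInvT.2.2 ⟨c, hcT, hcy⟩ d hdS (Finset.mem_insert_self y c)
      refine ⟨c, hcT, ?_, ?_⟩
      · -- invariant preserved
        refine ⟨?_, ?_, ?_⟩
        · intro c' hc' hc'y e he hey hcards
          have hc'T := Finset.mem_of_mem_erase hc'
          have heT : e ∈ T := hInvT.1 c' hc'T hc'y e he hey hcards
          refine Finset.mem_erase.mpr ⟨?_, heT⟩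
          intro hec
          subst hec
          have hle : c'.card ≤ e.card :=
            hcmax c' (Finset.mem_filter.mpr ⟨hc'T, hc'y⟩)
          exact absurd hcards (not_lt.mpr hle)
        · intro c' hc' hc'y e he hey hcards
          have heT : e ∈ T := hInvT.2.1 c' (Finset.mem_of_mem_erase hc') hc'y e he hey hcards
          refine Finset.mem_erase.mpr ⟨fun hec => hcy (hec ▸ hey), heT⟩
        · rintro ⟨c', hc', hc'y⟩ e he hey
          have heT : e ∈ T := hInvT.2.2 ⟨c', Finset.mem_of_mem_erase hc', hc'y⟩ e he hey
          exact Finset.mem_erase.mpr ⟨fun hec => hcy (hec ▸ hey), heT⟩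
      · -- c is a beat point (upper witness `d`)
        refine ⟨hTcur hcT, Or.inr ⟨d, hTcur hdT, ?_, ?_⟩⟩
        · rw [Finset.lt_iff_ssubset, hddef]
          exact Finset.ssubset_insert hcy
        · intro z hz hcz
          rw [Finset.lt_iff_ssubset] at hcz
          have hxz : x ∈ z := hcz.1 hcx
          have hzT : z ∈ T := hcur hz hxz
          have hyz : y ∈ z := by
            by_contra hyz
            have h1 := hcmax z (Finset.mem_filter.mpr ⟨hzT, hyz⟩)
            have h2 := Finset.card_lt_card hcz
            exact absurd h2 (not_lt.mpr h1)
          rw [Finset.le_iff_subset, hddef]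
          exact Finset.insert_subset hyz hcz.1
    · -- phase 2: remove a member of minimal cardinality (all contain y)
      obtain ⟨c, hcT, hcmin⟩ := Finset.exists_min_image T (fun c => c.card) hTne
      have hcy : y ∈ c := by
        by_contra hcy
        exact hyf ⟨c, Finset.mem_filter.mpr ⟨hcT, hcy⟩⟩
      have hcS := hTS hcT
      obtain ⟨hcF, hcx⟩ := hmemS.mp hcS
      set m := c.erase x with hmdef
      have hmF : m ∈ F := H2 c hcF hcx hcy
      have hmcur : m ∈ F \ (S \ T) := by
        rw [Finset.mem_sdiff]
        refine ⟨hmF, ?_⟩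
        intro hmem
        have : x ∈ m := (hmemS.mp (Finset.mem_sdiff.mp hmem).1).2
        exact (Finset.notMem_erase x c) this
      refine ⟨c, hcT, ?_, ?_⟩
      · refine ⟨?_, ?_, ?_⟩
        · intro c' hc' hc'y _ _ _ _
          exact absurd ⟨c', Finset.mem_filter.mpr ⟨Finset.mem_of_mem_erase hc', hc'y⟩⟩ hyf
        · intro c' hc' hc'y e he hey hcards
          have heT : e ∈ T := hInvT.2.1 c' (Finset.mem_of_mem_erase hc') hc'y e he hey hcards
          refine Finset.mem_erase.mpr ⟨?_, heT⟩
          intro hec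
          subst hec
          have h1 := hcmin c' (Finset.mem_of_mem_erase hc')
          exact absurd hcards (not_lt.mpr h1)
        · rintro ⟨c', hc', hc'y⟩
          exact absurd ⟨c', Finset.mem_filter.mpr ⟨Finset.mem_of_mem_erase hc', hc'y⟩⟩ hyf
      · -- c is a beat point (lower witness `m`)
        refine ⟨hTcur hcT, Or.inl ⟨m, hmcur, ?_, ?_⟩⟩
        · rw [Finset.lt_iff_ssubset, hmdef]
          exact Finset.erase_ssubset hcx
        · intro z hz hzc
          rw [Finset.lt_iff_ssubset] at hzc
          have hxz : x ∉ z := by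
            intro hxz
            have hzT : z ∈ T := hcur hz hxz
            have h1 := hcmin z hzT
            have h2 := Finset.card_lt_card hzc
            exact absurd h2 (not_lt.mpr h1)
          rw [Finset.le_iff_subset, hmdef, Finset.subset_erase]
          exact ⟨hzc.1, hxz⟩

end TwoPhase

section Chains

variable {P : Type} [PartialOrder P]

/-- The nonempty chains of `X` : the faces of the order complex. -/
noncomputable def chainsOf (X : Finset P) : Finset (Finset P) := (orderCplx X).faces

lemma mem_chainsOf {X : Finset P} {c : Finset P} :
    c ∈ chainsOf X ↔ c ⊆ X ∧ c.Nonempty ∧ IsChain (· ≤ ·) (c : Set P) := by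
  unfold chainsOf orderCplx
  simp only [Finset.mem_filter, Finset.mem_powerset]
  try tauto

lemma singleton_mem_chainsOf {X : Finset P} {v : P} (hv : v ∈ X) : {v} ∈ chainsOf X := by
  rw [mem_chainsOf]
  refine ⟨Finset.singleton_subset_iff.mpr hv, ⟨v, Finset.mem_singleton_self v⟩, ?_⟩
  simp only [Finset.coe_singleton]
  exact Set.Subsingleton.isChain (Set.subsingleton_singleton)

lemma chainsOf_singleton (v : P) : chainsOf ({v} : Finset P) = {({v} : Finset P)} := by
  ext c
  rw [mem_chainsOf, Finset.mem_singleton]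
  constructor
  · rintro ⟨hsub, hne, -⟩
    rcases Finset.subset_singleton_iff.mp hsub with h | h
    · exact absurd h (Finset.nonempty_iff_ne_empty.mp hne)
    · exact h
  · rintro rfl
    exact (mem_chainsOf.mp (singleton_mem_chainsOf (Finset.mem_singleton_self v))).elim
      (fun h1 h2 => ⟨h1, h2⟩)

/-- Every chain extends to a maximal chain. -/
lemma exists_maximal_chain {X : Finset P} {c : Finset P} (hc : c ∈ chainsOf X) :
    ∃ m ∈ chainsOf X, c ⊆ m ∧ ∀ d ∈ chainsOf X, m ⊆ d → d = m := by
  have hne : ((chainsOf X).filter (fun d => c ⊆ d)).Nonempty :=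
    ⟨c, Finset.mem_filter.mpr ⟨hc, subset_rfl⟩⟩
  obtain ⟨m, hm, hmax⟩ := finset_exists_maximal_old _ hne
  obtain ⟨hmC, hcm⟩ := Finset.mem_filter.mp hm
  refine ⟨m, hmC, hcm, ?_⟩
  intro d hd hmd
  by_contra hne'
  have hdm : m ⊂ d := Finset.ssubset_iff_subset_ne.mpr ⟨hmd, fun h => hne' h.symm⟩
  exact hmax d (Finset.mem_filter.mpr ⟨hd, hcm.trans hmd⟩) (Finset.lt_iff_ssubset.mpr hdm)

/-- A beat point of `X` induces a strong collapse of the chain poset. -/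
lemma chains_collapse_erase {X : Finset P} {x : P} (hb : BeatPoint X x) :
    PosetStrongCollapses (chainsOf X) (chainsOf (X.erase x)) := by
  obtain ⟨hxX, hw⟩ := hb
  -- get the witness y with the comparability property
  have hwit : ∃ y ∈ X, y ≠ x ∧ ∀ z ∈ X, (z ≤ x ∨ x ≤ z) → (z ≤ y ∨ y ≤ z) := by
    rcases hw with ⟨y, hyX, hylt, hymax⟩ | ⟨y, hyX, hylt, hymin⟩
    · refine ⟨y, hyX, ne_of_lt hylt, ?_⟩
      intro z hz hcmp
      rcases hcmp with hzx | hxz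
      · rcases eq_or_lt_of_le hzx with rfl | hlt
        · exact Or.inr (le_of_lt hylt)
        · exact Or.inl (hymax z hz hlt)
      · exact Or.inr (le_of_lt (lt_of_lt_of_le hylt hxz))
    · refine ⟨y, hyX, ne_of_gt hylt, ?_⟩
      intro z hz hcmp
      rcases hcmp with hzx | hxz
      · exact Or.inl (le_of_lt (lt_of_le_of_lt hzx hylt))
      · rcases eq_or_lt_of_le hxz with rfl | hlt
        · exact Or.inl (le_of_lt hylt)
        · exact Or.inr (hymin z hz hlt)
  obtain ⟨y, hyX, hyx, hkey⟩ := hwit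
  have H1 : ∀ c ∈ chainsOf X, x ∈ c → insert y c ∈ chainsOf X := by
    intro c hc hxc
    obtain ⟨hsub, hne, hchain⟩ := mem_chainsOf.mp hc
    rw [mem_chainsOf]
    refine ⟨Finset.insert_subset hyX hsub, ⟨y, Finset.mem_insert_self y c⟩, ?_⟩
    rw [Finset.coe_insert]
    refine hchain.insert ?_
    intro b hb' hyb
    have hbX : b ∈ X := hsub hb'
    have hbx : b ≤ x ∨ x ≤ b := by
      by_cases hbx' : b = x
      · exact Or.inl (le_of_eq hbx')
      · rcases hchain hb' (by exact_mod_cast hxc) hbx' with h | h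
        · exact Or.inl h
        · exact Or.inr h
    rcases hkey b hbX hbx with h | h
    · exact Or.inr h
    · exact Or.inl h
  have H2 : ∀ c ∈ chainsOf X, x ∈ c → y ∈ c → c.erase x ∈ chainsOf X := by
    intro c hc hxc hyc
    obtain ⟨hsub, _, hchain⟩ := mem_chainsOf.mp hc
    rw [mem_chainsOf]
    refine ⟨(Finset.erase_subset x c).trans hsub, ⟨y, Finset.mem_erase.mpr ⟨hyx, hyc⟩⟩, ?_⟩
    refine hchain.mono ?_
    intro u hu
    exact_mod_cast Finset.mem_of_mem_erase (by exact_mod_cast hu)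
  have htp := two_phase (chainsOf X) x y (fun h => hyx h.symm) H1 H2
  have hfe : (chainsOf X).filter (fun c => x ∉ c) = chainsOf (X.erase x) := by
    ext c
    rw [Finset.mem_filter, mem_chainsOf, mem_chainsOf, Finset.subset_erase]
    tauto
  rwa [hfe] at htp

lemma chains_collapses {X Y : Finset P} (h : PosetStrongCollapses X Y) :
    PosetStrongCollapses (chainsOf X) (chainsOf Y) := by
  induction h with
  | refl => exact Relation.ReflTransGen.refl
  | tail _ hstep ih =>
    obtain ⟨x, hb, rfl⟩ := hstep
    exact ih.trans (chains_collapse_erase hb)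

/-- Forward direction: contractible poset has contractible barycentric subdivision. -/
lemma contractible_chains {X : Finset P} (h : PosetContractible X) :
    PosetContractible (chainsOf X) := by
  obtain ⟨v, hv⟩ := h
  refine ⟨{v}, ?_⟩
  have := chains_collapses hv
  rwa [chainsOf_singleton] at this

/-- The key combinatorial lemma: following a strong collapse of the chain poset,
keeping all maximal chains and all singletons, until the first singleton is removed. -/
lemma claimC {X₀ : Finset P} (hX₀ : X₀.Nonempty) {cc : Finset P}
    (hcol : PosetStrongCollapses (chainsOf X₀) {cc}) :
    (∃ v, X₀ = {v}) ∨ (∃ v w, v ∈ X₀ ∧ w ∈ X₀ ∧ v ≠ w ∧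
      ∀ m ∈ chainsOf X₀, (∀ d ∈ chainsOf X₀, m ⊆ d → d = m) → v ∈ m → w ∈ m) := by
  have main : ∀ Y : Finset (Finset P), Relation.ReflTransGen ElemPosetStrongCollapse Y {cc} →
      Y ⊆ chainsOf X₀ →
      (∀ m ∈ chainsOf X₀, (∀ d ∈ chainsOf X₀, m ⊆ d → d = m) → m ∈ Y) →
      (∀ v ∈ X₀, {v} ∈ Y) →
      (∃ v, X₀ = {v}) ∨ (∃ v w, v ∈ X₀ ∧ w ∈ X₀ ∧ v ≠ w ∧
        ∀ m ∈ chainsOf X₀, (∀ d ∈ chainsOf X₀, m ⊆ d → d = m) → v ∈ m → w ∈ m) := by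
    intro Y h
    induction h using Relation.ReflTransGen.head_induction_on with
    | refl =>
      intro _ _ hsing
      left
      obtain ⟨v₀, hv₀⟩ := hX₀
      have hcc : cc = {v₀} := (Finset.mem_singleton.mp (hsing v₀ hv₀)).symm
      refine ⟨v₀, ?_⟩
      ext u
      simp only [Finset.mem_singleton]
      constructor
      · intro hu
        have := Finset.mem_singleton.mp (hsing u hu)
        rw [hcc] at this
        exact Finset.singleton_inj.mp this
      · rintro rfl; exact hv₀
    | @head Y Y₁ hstep hrtg ih =>
      intro hsub hmax hsing
      obtain ⟨t, hbt, hY₁⟩ := hstep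
      have htY : t ∈ Y := hbt.1
      have htC : t ∈ chainsOf X₀ := hsub htY
      obtain ⟨htX, htne, -⟩ := mem_chainsOf.mp htC
      by_cases hcard : t.card = 1
      · -- a singleton is removed: extract the domination data
        obtain ⟨v, rfl⟩ := Finset.card_eq_one.mp hcard
        right
        rcases hbt.2 with ⟨z, hzY, hzlt, -⟩ | ⟨y₀, hy₀Y, hlt, hmin⟩
        · -- nothing lies strictly below a singleton chain
          exfalso
          rw [Finset.lt_iff_ssubset] at hzlt
          obtain ⟨-, hzne, -⟩ := mem_chainsOf.mp (hsub hzY)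
          rcases Finset.subset_singleton_iff.mp hzlt.1 with h | h
          · exact (Finset.nonempty_iff_ne_empty.mp hzne) h
          · rw [h] at hzlt
            exact hzlt.2 subset_rfl
        · rw [Finset.lt_iff_ssubset] at hlt
          obtain ⟨w, hwy₀, hwv⟩ := Finset.exists_of_ssubset hlt
          have hwv' : w ≠ v := fun h => hwv (h ▸ Finset.mem_singleton_self v)
          have hy₀C : y₀ ∈ chainsOf X₀ := hsub hy₀Y
          obtain ⟨hy₀X, -, -⟩ := mem_chainsOf.mp hy₀C
          refine ⟨v, w, htX (Finset.mem_singleton_self v), hy₀X hwy₀, fun h => hwv' h.symm, ?_⟩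
          intro m hmC hmmax hvm
          have hmY : m ∈ Y := hmax m hmC hmmax
          have hvsub : ({v} : Finset P) ⊆ m := Finset.singleton_subset_iff.mpr hvm
          have hmne : ({v} : Finset P) ≠ m := by
            intro h
            have heq : y₀ = m := hmmax y₀ hy₀C (h ▸ hlt.1)
            rw [← h] at heq
            exact hlt.2 (by rw [heq])
          have := hmin m hmY (Finset.lt_iff_ssubset.mpr (Finset.ssubset_iff_subset_ne.mpr ⟨hvsub, hmne⟩))
          rw [Finset.le_iff_subset] at this
          exact this hwy₀
      · -- |t| ≥ 2 : t is neither a singleton nor (as we show) maximal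
        have hcard2 : 1 < t.card :=
          lt_of_le_of_ne (Finset.card_pos.mpr htne) (fun h => hcard h.symm)
        have htnotmax : ¬(∀ d ∈ chainsOf X₀, t ⊆ d → d = t) := by
          intro hm
          rcases hbt.2 with ⟨ρ, hρY, hρlt, hρmax⟩ | ⟨d, hdY, hdlt, -⟩
          · -- all singletons of t lie below t, so they are ≤ ρ, contradiction
            have hsubρ : t ⊆ ρ := by
              intro u hu
              have huX : u ∈ X₀ := htX hu
              have huY : {u} ∈ Y := hsing u huX
              have hulttop : ({u} : Finset P) < t := by
                rw [Finset.lt_iff_ssubset, Finset.ssubset_iff_subset_ne]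
                refine ⟨Finset.singleton_subset_iff.mpr hu, ?_⟩
                intro h
                rw [← h, Finset.card_singleton] at hcard2
                exact lt_irrefl 1 hcard2
              have := hρmax {u} huY hulttop
              rw [Finset.le_iff_subset] at this
              exact Finset.singleton_subset_iff.mp this
            rw [Finset.lt_iff_ssubset] at hρlt
            exact hρlt.2 hsubρ
          · rw [Finset.lt_iff_ssubset] at hdlt
            have heq := hm d (hsub hdY) hdlt.1
            exact hdlt.2 (by rw [heq])
        subst hY₁
        refine ih ((Finset.erase_subset t Y).trans hsub) ?_ ?_
        · intro m hmC hmmax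
          refine Finset.mem_erase.mpr ⟨?_, hmax m hmC hmmax⟩
          intro h
          exact htnotmax (h ▸ hmmax)
        · intro v hv
          refine Finset.mem_erase.mpr ⟨?_, hsing v hv⟩
          intro h
          have : t.card = 1 := by rw [← h]; exact Finset.card_singleton v
          exact hcard this
  exact main (chainsOf X₀) hcol subset_rfl (fun m hm _ => hm) (fun v hv => singleton_mem_chainsOf hv)

/-- In a minimal poset there is no "dominated" point for the chain complex. -/
lemma no_domination_of_minimal {X₀ : Finset P} (hmin : MinimalPoset X₀)
    {v w : P} (hv : v ∈ X₀) (hw : w ∈ X₀) (hvw : v ≠ w)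
    (hdom : ∀ m ∈ chainsOf X₀, (∀ d ∈ chainsOf X₀, m ⊆ d → d = m) → v ∈ m → w ∈ m) :
    False := by
  -- w is comparable with v and with everything comparable to v
  have hpair : ∀ z ∈ X₀, (z ≤ v ∨ v ≤ z) → ({z, v} : Finset P) ∈ chainsOf X₀ := by
    intro z hz hcmp
    rw [mem_chainsOf]
    refine ⟨?_, ⟨z, Finset.mem_insert_self z {v}⟩, ?_⟩
    · intro u hu
      rcases Finset.mem_insert.mp hu with rfl | hu'
      · exact hz
      · rw [Finset.mem_singleton.mp hu']; exact hv
    · rw [Finset.coe_insert, Finset.coe_singleton]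
      refine (Set.Subsingleton.isChain Set.subsingleton_singleton).insert ?_
      intro b hb _
      rw [Set.mem_singleton_iff] at hb
      subst hb
      exact hcmp
  have hcomp : ∀ z ∈ X₀, (z ≤ v ∨ v ≤ z) → (z ≤ w ∨ w ≤ z) := by
    intro z hz hcmp
    obtain ⟨m, hmC, hsubm, hmmax⟩ := exists_maximal_chain (hpair z hz hcmp)
    have hvm : v ∈ m := hsubm (Finset.mem_insert_of_mem (Finset.mem_singleton_self v))
    have hwm : w ∈ m := hdom m hmC hmmax hvm
    have hzm : z ∈ m := hsubm (Finset.mem_insert_self z {v})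
    obtain ⟨-, -, hchain⟩ := mem_chainsOf.mp hmC
    by_cases hzw : z = w
    · exact Or.inl (le_of_eq hzw)
    · rcases hchain (by exact_mod_cast hzm) (by exact_mod_cast hwm) hzw with h | h
      · exact Or.inl h
      · exact Or.inr h
  have hwv : w ≤ v ∨ v ≤ w := by
    rcases hcomp v hv (Or.inl le_rfl) with h | h
    · exact Or.inr h
    · exact Or.inl h
  rcases hwv with hwv | hvw'
  · -- case w < v : infinite descent in (w, v]
    have hwv' : w < v := lt_of_le_of_ne hwv (fun h => hvw h.symm)
    set D := X₀.filter (fun z => w < z ∧ z ≤ v) with hDdef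
    have hvD : v ∈ D := Finset.mem_filter.mpr ⟨hv, hwv', le_rfl⟩
    obtain ⟨z, hzD, hzmin⟩ := finset_exists_minimal_old D ⟨v, hvD⟩
    obtain ⟨hzX, hwz, hzv⟩ := Finset.mem_filter.mp hzD
    -- z is not a beat point, so w is not the maximum of the points below z
    have hnb := hmin z
    rw [BeatPoint] at hnb
    push_neg at hnb
    have hnb2 := hnb hzX
    have := hnb2.1 w hw hwz
    obtain ⟨p, hpX, hpz, hpw⟩ := this
    have hpv : p < v := lt_of_lt_of_le hpz hzv
    have hpcmp := hcomp p hpX (Or.inl (le_of_lt hpv))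
    rcases hpcmp with h | h
    · exact hpw h
    · have hwp : w < p := lt_of_le_of_ne h (fun hh => hpw (le_of_eq hh.symm))
      have hpD : p ∈ D := Finset.mem_filter.mpr ⟨hpX, hwp, le_of_lt hpv⟩
      exact hzmin p hpD hpz
  · -- case v < w : infinite ascent in [v, w)
    have hvw'' : v < w := lt_of_le_of_ne hvw' hvw
    set D := X₀.filter (fun z => v ≤ z ∧ z < w) with hDdef
    have hvD : v ∈ D := Finset.mem_filter.mpr ⟨hv, le_rfl, hvw''⟩
    obtain ⟨z, hzD, hzmax⟩ := finset_exists_maximal_old D ⟨v, hvD⟩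
    obtain ⟨hzX, hvz, hzw⟩ := Finset.mem_filter.mp hzD
    have hnb := hmin z
    rw [BeatPoint] at hnb
    push_neg at hnb
    have hnb2 := hnb hzX
    have := hnb2.2 w hw hzw
    obtain ⟨p, hpX, hzp, hpw⟩ := this
    have hvp : v < p := lt_of_le_of_lt hvz hzp
    have hpcmp := hcomp p hpX (Or.inr (le_of_lt hvp))
    rcases hpcmp with h | h
    · have hpw' : p < w := lt_of_le_of_ne h (fun hh => hpw (le_of_eq hh.symm))
      have hpD : p ∈ D := Finset.mem_filter.mpr ⟨hpX, le_of_lt hvp, hpw'⟩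
      exact hzmax p hpD hzp
    · exact hpw h

end Chains


/-- a finite poset is contractible iff its barycentric subdivision
`X' = X(K(X))` (the face poset of its order complex) is contractible. -/
theorem stmt14 {P : Type} [PartialOrder P] (X : Finset P) :
    PosetContractible X ↔ PosetContractible (orderCplx X).faces := by
  have hch : (orderCplx X).faces = chainsOf X := rfl
  rw [hch]
  constructor
  · exact contractible_chains
  · intro h
    obtain ⟨X₀, hcol, hminX₀⟩ := exists_core X
    have h₀ : PosetContractible (chainsOf X₀) :=
      contractible_of_collapses h (chains_collapses hcol)
    obtain ⟨cc, hcc⟩ := h₀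
    have hX₀ne : X₀.Nonempty := by
      obtain ⟨c, hcmem⟩ := source_nonempty hcc
      obtain ⟨hsub, hne, -⟩ := mem_chainsOf.mp hcmem
      obtain ⟨u, hu⟩ := hne
      exact ⟨u, hsub hu⟩
    rcases claimC hX₀ne hcc with ⟨v, rfl⟩ | ⟨v, w, hv, hw, hvw, hdom⟩
    · exact ⟨v, hcol⟩
    · exact (no_domination_of_minimal hminX₀ hv hw hvw hdom).elim

end StrongHomotopy
end
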